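/- arXiv:2601.11445 — 8 statements merged into one kernel-verified Lean document; each statement's English description precedes it below -/
import Mathlib

section
/- Let H be a real Hilbert space and C : [0,T] ⇉ H a Hausdorff-continuous set-valued map with closed values such that there exists ρ > 0 for which, for every t ∈ [0,T], the set C(t) has nonempty interior and is ρ-uniformly prox-regular. Suppose that for some t̄ ∈ [0,T] there exist r > 0 and x̄ ∈ C(t̄) such that the open ball B_r(x̄) is contained in C(t̄). Then, setting δ := 𝒫_C^{-1}(min{r/2, ρ/2}), one has B_{r/2}(x̄) ⊆ C(t) for every t ∈ (t̄ − δ, t̄ + δ) ∩ [0,T]. -/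
open Set Metric
open scoped ENNReal

/-- The proximal normal cone of a set `S` at a point `x`. -/
def proxNormalCone {H : Type*} [NormedAddCommGroup H] [InnerProductSpace ℝ H]
    (S : Set H) (x : H) : Set H :=
  {ζ | ∃ σ : ℝ, 0 ≤ σ ∧ ∀ y ∈ S, (inner ℝ ζ (y - x) : ℝ) ≤ σ * ‖y - x‖ ^ 2}

/-- A set `S` is `ρ`-uniformly prox-regular. -/
def UniformProxRegular {H : Type*} [NormedAddCommGroup H] [InnerProductSpace ℝ H]
    (ρ : ℝ) (S : Set H) : Prop :=
  ∀ x ∈ S, ∀ ζ ∈ proxNormalCone S x, ∀ x' ∈ S,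
    (inner ℝ ζ (x' - x) : ℝ) ≤ ‖ζ‖ / (2 * ρ) * ‖x' - x‖ ^ 2

/-- A set-valued map is Hausdorff-continuous on `[0,T]`. -/
def HausdorffCts {H : Type*} [NormedAddCommGroup H] (T : ℝ) (C : ℝ → Set H) : Prop :=
  ∀ ε > 0, ∃ δ > 0, ∀ s ∈ Icc (0:ℝ) T, ∀ t ∈ Icc (0:ℝ) T, |s - t| < δ →
    EMetric.hausdorffEdist (C s) (C t) < ENNReal.ofReal ε

/-- Modulus of continuity of a set-valued map `D` on `[0,T]`. -/
noncomputable def modCont {H : Type*} [NormedAddCommGroup H]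
    (T : ℝ) (D : ℝ → Set H) (r : ℝ) : ℝ≥0∞ :=
  ⨆ (t : ℝ) (_ : t ∈ Icc 0 T) (s : ℝ) (_ : s ∈ Icc 0 T) (_ : |t - s| ≤ r),
    EMetric.hausdorffEdist (D t) (D s)

/-- Right generalized inverse of the modulus of continuity, with `inf ∅ = ∞`. -/
noncomputable def modContInv {H : Type*} [NormedAddCommGroup H]
    (T : ℝ) (D : ℝ → Set H) (x : ℝ) : ℝ≥0∞ :=
  ⨅ (r : ℝ) (_ : 0 ≤ r) (_ : ENNReal.ofReal x ≤ modCont T D r), ENNReal.ofReal r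

/-!
In a Hilbert space the points having a nearest point in a closed set `S` are dense: for each
`η > 0` the points whose approximate nearest points in `S` cluster within `η` form a dense open
set (density comes from Stewart's theorem), and at a point of the Baire intersection of these
sets a minimizing sequence is Cauchy.

Now let `μ = min (r/2) (ρ/2)`; the bound on `|t - tbar|` says `d_H(C tbar, C t) < μ`. If
`ball xbar (r/2)` were not contained in `C t`, pick `x` in the difference with a nearest point
`p ∈ C t`. Then `x - p` is a proximal normal, so by `ρ`-prox-regularity the point `w` at distance
`μ ≤ ρ` from `p` on the ray through `x` is at distance `≥ μ` from `C t`. But `w` lies in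
`ball xbar r ⊆ C tbar`, all of whose points are within `μ` of `C t`.
-/

open Filter Topology

section ApproxProj

variable {E : Type*}

def approxProj [PseudoMetricSpace E] (S : Set E) (x : E) (δ : ℝ) : Set E :=
  {z ∈ S | dist x z ≤ infDist x S + δ}

def approxProjSmall [PseudoMetricSpace E] (S : Set E) (η : ℝ) : Set E :=
  {x | ∃ δ > 0, ∀ z ∈ approxProj S x δ, ∀ z' ∈ approxProj S x δ, dist z z' ≤ η}

variable [PseudoMetricSpace E] {S : Set E} {x : E} {δ δ' η η' : ℝ}

theorem approxProj_mono (h : δ ≤ δ') : approxProj S x δ ⊆ approxProj S x δ' :=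
  fun _ ⟨hz, hxz⟩ => ⟨hz, hxz.trans (by linarith)⟩

theorem approxProj_nonempty (hS : S.Nonempty) (hδ : 0 < δ) : (approxProj S x δ).Nonempty := by
  obtain ⟨z, hz, hxz⟩ := (infDist_lt_iff hS).mp (lt_add_of_pos_right (infDist x S) hδ)
  exact ⟨z, hz, hxz.le⟩

theorem approxProjSmall_mono (h : η ≤ η') : approxProjSmall S η ⊆ approxProjSmall S η' :=
  fun _ ⟨δ, hδ, hsmall⟩ => ⟨δ, hδ, fun z hz z' hz' => (hsmall z hz z' hz').trans h⟩

theorem isOpen_approxProjSmall (S : Set E) (η : ℝ) : IsOpen (approxProjSmall S η) := by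
  refine Metric.isOpen_iff.mpr fun x ⟨δ, hδ, hsmall⟩ => ⟨δ / 4, by positivity, fun x' hx' => ?_⟩
  have hxx' : dist x' x < δ / 4 := mem_ball.mp hx'
  have hinf : infDist x' S ≤ infDist x S + dist x' x := infDist_le_infDist_add_dist
  have hsub : approxProj S x' (δ / 4) ⊆ approxProj S x δ := fun z ⟨hz, hx'z⟩ =>
    ⟨hz, by linarith [dist_triangle_left x z x']⟩
  exact ⟨δ / 4, by positivity, fun z hz z' hz' => hsmall z (hsub hz) z' (hsub hz')⟩

theorem exists_dist_eq_infDist_of_forall_mem_approxProjSmall [CompleteSpace E]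
    (hSc : IsClosed S) (hS : S.Nonempty) (hx : ∀ η > 0, x ∈ approxProjSmall S η) :
    ∃ p ∈ S, dist x p = infDist x S := by
  choose z hz using fun n : ℕ => approxProj_nonempty (x := x) hS (Nat.one_div_pos_of_nat (n := n))
  have hcauchy : CauchySeq z := by
    refine Metric.cauchySeq_iff.mpr fun ε hε => ?_
    obtain ⟨δ, hδ, hsmall⟩ := hx (ε / 2) (by positivity)
    obtain ⟨N, hN⟩ := exists_nat_one_div_lt hδ
    have hmem : ∀ n ≥ N, z n ∈ approxProj S x δ := fun n hn =>
      approxProj_mono (hN.le.trans' (Nat.one_div_le_one_div hn)) (hz n)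
    exact ⟨N, fun m hm n hn => (hsmall _ (hmem m hm) _ (hmem n hn)).trans_lt (by linarith)⟩
  obtain ⟨p, hp⟩ := cauchySeq_tendsto_of_complete hcauchy
  have hpS : p ∈ S := hSc.mem_of_tendsto hp (Eventually.of_forall fun n => (hz n).1)
  refine ⟨p, hpS, le_antisymm ?_ (infDist_le_dist_of_mem hpS)⟩
  have hlim : Tendsto (fun n : ℕ => infDist x S + 1 / ((n : ℝ) + 1)) atTop (𝓝 (infDist x S)) := by
    simpa using
      (tendsto_const_nhds (x := infDist x S)).add tendsto_one_div_add_atTop_nhds_zero_nat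
  exact le_of_tendsto_of_tendsto' (tendsto_const_nhds.dist hp) hlim fun n => (hz n).2

end ApproxProj

section Hilbert

variable {E : Type*} [NormedAddCommGroup E] [InnerProductSpace ℝ E] {S : Set E} {x : E} {η : ℝ}

open AffineMap in
theorem dist_lineMap_sq (x p w : E) (c : ℝ) :
    dist (lineMap x p c) w ^ 2 =
      (1 - c) * dist x w ^ 2 + c * dist p w ^ 2 - c * (1 - c) * dist x p ^ 2 := by
  have hl : lineMap x p c - w = (1 - c) • (x - w) + c • (p - w) := by
    rw [lineMap_apply_module]; module
  have hxp : x - p = (x - w) - (p - w) := by abel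
  rw [dist_eq_norm, dist_eq_norm, dist_eq_norm, dist_eq_norm, hl, hxp, norm_add_sq_real,
    norm_sub_sq_real (x - w), norm_smul, norm_smul, real_inner_smul_left, real_inner_smul_right,
    Real.norm_eq_abs, Real.norm_eq_abs, mul_pow, mul_pow, sq_abs, sq_abs]
  ring

open AffineMap in
theorem mul_dist_sq_le_of_mem_approxProj_lineMap {p w : E} {c δ : ℝ} (hp : p ∈ S)
    (hc0 : 0 ≤ c) (hc1 : c ≤ 1) (hδ : δ ≤ infDist x S) (hxp : dist x p ≤ infDist x S + δ)
    (hw : w ∈ approxProj S (lineMap x p c) δ) :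
    c * dist p w ^ 2 ≤ 4 * dist x p * δ + c * δ ^ 2 := by
  obtain ⟨hwS, hyw⟩ := hw
  have hyp : dist (lineMap x p c) p = (1 - c) * dist x p := by
    rw [dist_lineMap_right, Real.norm_of_nonneg (by linarith)]
  have hm : infDist x S ≤ dist x p := infDist_le_dist_of_mem hp
  have h1 : dist (lineMap x p c) w ≤ (1 - c) * dist x p + δ := by
    linarith [(infDist_le_dist_of_mem hp : infDist (lineMap x p c) S ≤ _)]
  have h2 : dist x p - δ ≤ dist x w := by
    linarith [(infDist_le_dist_of_mem hwS : infDist x S ≤ _)]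
  have h1' := pow_le_pow_left₀ dist_nonneg h1 2
  have h2' := mul_le_mul_of_nonneg_left (pow_le_pow_left₀ (by linarith) h2 2)
    (sub_nonneg.mpr hc1)
  have := dist_lineMap_sq x p w c
  nlinarith [mul_nonneg (mul_nonneg hc0 (dist_nonneg : 0 ≤ dist x p)) (show 0 ≤ δ by linarith)]

theorem exists_pos_le_and_lt_of_continuousAt {f : ℝ → ℝ} (hf : ContinuousAt f 0) (h0 : f 0 = 0)
    {a b : ℝ} (ha : 0 < a) (hb : 0 < b) : ∃ c, 0 < c ∧ c ≤ a ∧ f c < b :=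
  ((eventually_mem_nhdsWithin (a := 0) (s := Ioi 0)).and <| nhdsWithin_le_nhds <|
    (eventually_le_nhds ha).and <| (h0 ▸ hf.tendsto).eventually_lt_const hb).exists

-- Moving `x` a fraction `c` towards a `δ`-approximate nearest point `p` forces, by Stewart's
-- theorem, all `δ`-approximate nearest points of the new point close to `p` once `δ ≪ c`.
open AffineMap in
theorem exists_lineMap_mem_approxProjSmall (hS : S.Nonempty) (hη : 0 < η)
    (hx : 0 < infDist x S) {ε : ℝ} (hε : 0 < ε) :
    ∃ y ∈ approxProjSmall S η, dist y x < ε := by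
  set d := infDist x S
  obtain ⟨c, hc0, hc1, hcε⟩ : ∃ c : ℝ, 0 < c ∧ c ≤ 1 ∧ c * (2 * d) < ε :=
    exists_pos_le_and_lt_of_continuousAt (f := (· * (2 * d))) (by fun_prop) (zero_mul _)
      one_pos hε
  obtain ⟨δ, hδ0, hδd, hδη⟩ :
      ∃ δ : ℝ, 0 < δ ∧ δ ≤ d ∧ 8 * d * δ + c * δ ^ 2 < c * (η / 2) ^ 2 :=
    exists_pos_le_and_lt_of_continuousAt (f := fun δ => 8 * d * δ + c * δ ^ 2) (by fun_prop)
      (by ring) hx (by positivity)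
  obtain ⟨p, hp, hxp⟩ := (infDist_lt_iff hS).mp (lt_add_of_pos_right d hδ0)
  have hclose : ∀ w ∈ approxProj S (lineMap x p c) δ, dist p w < η / 2 := by
    intro w hw
    have hsq := mul_dist_sq_le_of_mem_approxProj_lineMap hp hc0.le hc1 hδd hxp.le hw
    have : c * dist p w ^ 2 < c * (η / 2) ^ 2 := by nlinarith
    exact (pow_lt_pow_iff_left₀ dist_nonneg (by positivity) two_ne_zero).mp
      (lt_of_mul_lt_mul_left this hc0.le)
  refine ⟨lineMap x p c, ⟨δ, hδ0, fun z hz z' hz' => ?_⟩, ?_⟩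
  · linarith [dist_triangle_left z z' p, hclose z hz, hclose z' hz']
  · rw [dist_lineMap_left, Real.norm_of_nonneg hc0.le]
    nlinarith

theorem dense_approxProjSmall (hS : S.Nonempty) (hη : 0 < η) : Dense (approxProjSmall S η) := by
  refine Metric.dense_iff.mpr fun x ε hε => ?_
  rcases (infDist_nonneg : 0 ≤ infDist x S).eq_or_lt with hx | hx
  · refine ⟨x, mem_ball_self hε, η / 2, half_pos hη, fun z hz z' hz' => ?_⟩
    linarith [dist_triangle_left z z' x, hz.2, hz'.2]
  · obtain ⟨y, hy, hyx⟩ := exists_lineMap_mem_approxProjSmall hS hη hx hε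
    exact ⟨y, hyx, hy⟩

theorem dense_setOf_exists_dist_eq_infDist [CompleteSpace E] (hSc : IsClosed S)
    (hS : S.Nonempty) : Dense {x | ∃ p ∈ S, dist x p = infDist x S} := by
  have hG : Dense (⋂ n : ℕ, approxProjSmall S (1 / ((n : ℝ) + 1))) :=
    dense_iInter_of_isOpen (fun _ => isOpen_approxProjSmall _ _)
      fun _ => dense_approxProjSmall hS Nat.one_div_pos_of_nat
  refine hG.mono fun x hx => exists_dist_eq_infDist_of_forall_mem_approxProjSmall hSc hS
    fun η hη => ?_
  obtain ⟨n, hn⟩ := exists_nat_one_div_lt hη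
  exact approxProjSmall_mono hn.le (mem_iInter.mp hx n)

end Hilbert

section ProxRegular

variable {H : Type*} [NormedAddCommGroup H] [InnerProductSpace ℝ H] {S : Set H} {ρ : ℝ}

theorem sub_mem_proxNormalCone_of_dist_eq_infDist {x p : H} (hxp : dist x p = infDist x S) :
    x - p ∈ proxNormalCone S p := by
  refine ⟨1 / 2, by norm_num, fun z hz => ?_⟩
  have hle : dist x p ≤ dist x z := hxp ▸ infDist_le_dist_of_mem hz
  have hsq : ‖x - z‖ ^ 2 = ‖x - p‖ ^ 2 - 2 * inner ℝ (x - p) (z - p) + ‖z - p‖ ^ 2 := by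
    rw [← norm_sub_sq_real, sub_sub_sub_cancel_right]
  rw [dist_eq_norm, dist_eq_norm] at hle
  nlinarith [norm_nonneg (x - p)]

theorem UniformProxRegular.mul_norm_le_dist_add_smul (hS : UniformProxRegular ρ S) (hρ : 0 < ρ)
    {p ζ z : H} {t : ℝ} (hp : p ∈ S) (hζ : ζ ∈ proxNormalCone S p) (hz : z ∈ S) (ht : 0 ≤ t)
    (htρ : t * ‖ζ‖ ≤ ρ) : t * ‖ζ‖ ≤ dist (p + t • ζ) z := by
  have hreg := hS p hp ζ hζ z hz
  have hsq : dist (p + t • ζ) z ^ 2 =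
      (t * ‖ζ‖) ^ 2 - 2 * t * inner ℝ ζ (z - p) + ‖z - p‖ ^ 2 := by
    rw [dist_eq_norm, show p + t • ζ - z = t • ζ - (z - p) by abel, norm_sub_sq_real,
      norm_smul, real_inner_smul_left, Real.norm_of_nonneg ht]
    ring
  have hinner : 2 * t * inner ℝ ζ (z - p) ≤ ‖z - p‖ ^ 2 := by
    calc 2 * t * inner ℝ ζ (z - p) ≤ 2 * t * (‖ζ‖ / (2 * ρ) * ‖z - p‖ ^ 2) := by gcongr
      _ = t * ‖ζ‖ / ρ * ‖z - p‖ ^ 2 := by field_simp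
      _ ≤ 1 * ‖z - p‖ ^ 2 := by gcongr; exact (div_le_one hρ).mpr htρ
      _ = ‖z - p‖ ^ 2 := one_mul _
  exact (pow_le_pow_iff_left₀ (by positivity) dist_nonneg two_ne_zero).mp (by linarith)

theorem UniformProxRegular.ball_subset_of_hausdorffEDist_lt [CompleteSpace H]
    (hS : UniformProxRegular ρ S) (hSc : IsClosed S) {K : Set H} {xbar : H} {r μ : ℝ}
    (hK : ball xbar r ⊆ K) (hKS : hausdorffEDist K S < ENNReal.ofReal μ) (hμr : μ ≤ r / 2)
    (hμρ : μ ≤ ρ) : ball xbar (r / 2) ⊆ S := by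
  have hnear : ∀ w ∈ K, ∃ z ∈ S, dist w z < μ := fun w hw =>
    let ⟨z, hz, hwz⟩ := exists_edist_lt_of_hausdorffEDist_lt hw hKS
    ⟨z, hz, edist_lt_ofReal.mp hwz⟩
  have hhalf : ball xbar (r / 2) ⊆ K := fun y hy =>
    hK (ball_subset_ball (by linarith [dist_nonneg.trans_lt (mem_ball.mp hy)]) hy)
  by_contra hsub
  obtain ⟨y, hy, hyS⟩ := not_subset.mp hsub
  have hSne : S.Nonempty := let ⟨z, hz, _⟩ := hnear y (hhalf hy); ⟨z, hz⟩
  obtain ⟨x, ⟨hx, hxS⟩, p, hp, hxp⟩ :=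
    (dense_setOf_exists_dist_eq_infDist hSc hSne).inter_open_nonempty (ball xbar (r / 2) ∩ Sᶜ)
      (isOpen_ball.inter hSc.isOpen_compl) ⟨y, hy, hyS⟩
  set D := dist x p
  have hD : 0 < D := dist_pos.mpr fun h => hxS (h ▸ hp)
  have hDμ : D < μ := by
    obtain ⟨z, hz, hxz⟩ := hnear x (hhalf hx)
    exact hxp ▸ (infDist_le_dist_of_mem hz).trans_lt hxz
  have hnorm : ‖x - p‖ = D := (dist_eq_norm x p).symm
  have htD : μ / D * ‖x - p‖ = μ := by rw [hnorm, div_mul_cancel₀ μ hD.ne']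
  set w := p + (μ / D) • (x - p)
  have hfar : ∀ z ∈ S, μ ≤ dist w z := fun z hz => htD ▸
    hS.mul_norm_le_dist_add_smul (hD.trans (hDμ.trans_le hμρ)) hp
      (sub_mem_proxNormalCone_of_dist_eq_infDist hxp) hz (div_pos (hD.trans hDμ) hD).le
      (htD.le.trans hμρ)
  have hw_sub : w - x = (μ / D - 1) • (x - p) := by simp only [w]; module
  have hwx : dist w x = μ - D := by
    rw [dist_eq_norm, hw_sub, norm_smul, hnorm,
      Real.norm_of_nonneg (by rw [sub_nonneg, le_div_iff₀ hD]; linarith)]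
    field_simp
  have hwK : w ∈ K := hK <| mem_ball.mpr <| by linarith [dist_triangle w x xbar, mem_ball.mp hx]
  obtain ⟨z, hz, hwz⟩ := hnear w hwK
  linarith [hfar z hz]

end ProxRegular

section ModulusOfContinuity

variable {H : Type*} [NormedAddCommGroup H] {T : ℝ} {D : ℝ → Set H}

theorem hausdorffEDist_le_modCont {s t : ℝ} (hs : s ∈ Icc 0 T) (ht : t ∈ Icc 0 T) :
    hausdorffEDist (D s) (D t) ≤ modCont T D |s - t| :=
  le_iSup₂_of_le s hs <| le_iSup₂_of_le t ht <| le_iSup_of_le le_rfl le_rfl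

theorem modContInv_le {x r : ℝ} (hr : 0 ≤ r) (h : ENNReal.ofReal x ≤ modCont T D r) :
    modContInv T D x ≤ ENNReal.ofReal r :=
  iInf₂_le_of_le r hr <| iInf_le_of_le h le_rfl

theorem hausdorffEDist_lt_of_lt_modContInv {s t x : ℝ} (hs : s ∈ Icc 0 T) (ht : t ∈ Icc 0 T)
    (h : ENNReal.ofReal |t - s| < modContInv T D x) :
    hausdorffEDist (D s) (D t) < ENNReal.ofReal x := by
  by_contra! hx
  rw [abs_sub_comm] at h
  exact h.not_ge (modContInv_le (abs_nonneg _) (hx.trans (hausdorffEDist_le_modCont hs ht)))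

end ModulusOfContinuity

theorem stmt1_general {H : Type*} [NormedAddCommGroup H] [InnerProductSpace ℝ H] [CompleteSpace H]
    (T : ℝ) (C : ℝ → Set H)
    (hclosed : ∀ t ∈ Icc (0:ℝ) T, IsClosed (C t))
    (ρ : ℝ) (hρ : 0 < ρ)
    (hpr : ∀ t ∈ Icc (0:ℝ) T, UniformProxRegular ρ (C t))
    (tbar : ℝ) (htbar : tbar ∈ Icc (0:ℝ) T)
    (r : ℝ) (xbar : H)
    (hball : ball xbar r ⊆ C tbar) :
    ∀ t ∈ Icc (0:ℝ) T,
      ENNReal.ofReal |t - tbar| < modContInv T C (min (r / 2) (ρ / 2)) →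
        ball xbar (r / 2) ⊆ C t := by
  intro t ht hlt
  exact (hpr t ht).ball_subset_of_hausdorffEDist_lt (hclosed t ht) hball
    (hausdorffEDist_lt_of_lt_modContInv htbar ht hlt) (min_le_left _ _)
    ((min_le_right _ _).trans (half_le_self hρ.le))

theorem stmt1 {H : Type*} [NormedAddCommGroup H] [InnerProductSpace ℝ H] [CompleteSpace H]
    (T : ℝ) (hT : 0 < T) (C : ℝ → Set H)
    (hclosed : ∀ t ∈ Icc (0:ℝ) T, IsClosed (C t))
    (hH : HausdorffCts T C)
    (ρ : ℝ) (hρ : 0 < ρ)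
    (hint : ∀ t ∈ Icc (0:ℝ) T, (interior (C t)).Nonempty)
    (hpr : ∀ t ∈ Icc (0:ℝ) T, UniformProxRegular ρ (C t))
    (tbar : ℝ) (htbar : tbar ∈ Icc (0:ℝ) T)
    (r : ℝ) (hr : 0 < r) (xbar : H) (hxbar : xbar ∈ C tbar)
    (hball : ball xbar r ⊆ C tbar) :
    ∀ t ∈ Icc (0:ℝ) T,
      ENNReal.ofReal |t - tbar| < modContInv T C (min (r / 2) (ρ / 2)) →
        ball xbar (r / 2) ⊆ C t :=
  stmt1_general T C hclosed ρ hρ hpr tbar htbar r xbar hball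
end

section
/- Let H be a real Hilbert space and C : [0,T] ⇉ H a Hausdorff-continuous set-valued map with closed values such that there exists ρ > 0 for which, for every t ∈ [0,T], the set C(t) is ρ-uniformly prox-regular. If C(t₀) = H for some t₀ ∈ [0,T], then C(t) = H for all t ∈ [0,T]. -/
/-!
If some `C s` were not all of `H`, the Borwein–Preiss variational principle applied to
`z ↦ ‖y - z‖ ^ 2` on `C s`, for a point `y ∉ C s`, yields a nonzero proximal normal `ζ` at some
`x ∈ C s`; `ρ`-prox-regularity then makes the open ball of radius `ρ` centred at
`x + (ρ / ‖ζ‖) • ζ` miss `C s`. So a `ρ`-prox-regular closed set that is within Hausdorff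
distance `ρ` of `H` is all of `H`, and uniform Hausdorff continuity propagates `C t = H` from
`t₀` over the connected interval `[0, T]`.
-/

open Set Metric
open scoped ENNReal

open Filter Topology
open scoped RealInnerProductSpace

lemma exists_mem_le_add_of_bddBelow {α : Type*} {S : Set α} {g : α → ℝ} (hne : S.Nonempty)
    (hbdd : BddBelow (g '' S)) {η : ℝ} (hη : 0 < η) : ∃ z ∈ S, ∀ w ∈ S, g z ≤ g w + η := by
  obtain ⟨_, ⟨z, hz, rfl⟩, hlt⟩ :=
    exists_lt_of_csInf_lt (hne.image g) (lt_add_of_pos_right (sInf (g '' S)) hη)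
  exact ⟨z, hz, fun w hw => hlt.le.trans (by gcongr; exact csInf_le hbdd ⟨w, hw, rfl⟩)⟩

section Penalization

variable {H : Type*} [SeminormedAddCommGroup H]

def penalized (f : H → ℝ) (μ : ℕ → ℝ) (x : ℕ → H) (n : ℕ) (z : H) : ℝ :=
  f z + ∑ i ∈ Finset.range n, μ i * ‖z - x i‖ ^ 2

variable {f : H → ℝ} {μ δ : ℕ → ℝ} {x : ℕ → H}

@[simp]
lemma penalized_zero (z : H) : penalized f μ x 0 z = f z := by
  simp [penalized]

lemma penalized_succ (n : ℕ) (z : H) :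
    penalized f μ x (n + 1) z = penalized f μ x n z + μ n * ‖z - x n‖ ^ 2 := by
  simp only [penalized, Finset.sum_range_succ, add_assoc]

lemma penalized_mono (hμ : ∀ n, 0 ≤ μ n) {n m : ℕ} (hnm : n ≤ m) (z : H) :
    penalized f μ x n z ≤ penalized f μ x m z := by
  unfold penalized
  exact add_le_add le_rfl <| Finset.sum_le_sum_of_subset_of_nonneg
    (Finset.range_subset_range.2 hnm) fun i _ _ => mul_nonneg (hμ i) (sq_nonneg _)

lemma penalized_le_add_tsum (hμ : ∀ n, 0 ≤ μ n) {z : H}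
    (hz : Summable fun i => μ i * ‖z - x i‖ ^ 2) (n : ℕ) :
    penalized f μ x n z ≤ f z + ∑' i, μ i * ‖z - x i‖ ^ 2 := by
  unfold penalized
  gcongr
  exact hz.sum_le_tsum _ fun i _ => mul_nonneg (hμ i) (sq_nonneg _)

def IsPenalizedNearMinSeq (S : Set H) (f : H → ℝ) (μ δ : ℕ → ℝ) (x : ℕ → H) : Prop :=
  ∀ n, x n ∈ S ∧ ∀ w ∈ S, penalized f μ x n (x n) ≤ penalized f μ x n w + δ n

lemma exists_isPenalizedNearMinSeq {S : Set H} (hne : S.Nonempty) (hbdd : BddBelow (f '' S))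
    (hμ : ∀ n, 0 ≤ μ n) (hδ : ∀ n, 0 < δ n) : ∃ x, IsPenalizedNearMinSeq S f μ δ x := by
  have hpick : ∀ (g : H → ℝ) (η : ℝ), ∃ z ∈ S,
      BddBelow (g '' S) → 0 < η → ∀ w ∈ S, g z ≤ g w + η := by
    intro g η
    by_cases h : BddBelow (g '' S) ∧ 0 < η
    · obtain ⟨z, hz, hmin⟩ := exists_mem_le_add_of_bddBelow hne h.1 h.2
      exact ⟨z, hz, fun _ _ => hmin⟩
    · obtain ⟨z, hz⟩ := hne
      exact ⟨z, hz, fun h₁ h₂ => absurd ⟨h₁, h₂⟩ h⟩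
  choose pick hpickS hpick using hpick
  -- Recursing on the penalized functions rather than on the points keeps this a plain `Nat.rec`.
  let G : ℕ → H → ℝ := fun n => Nat.rec f (fun n g z => g z + μ n * ‖z - pick g (δ n)‖ ^ 2) n
  let x : ℕ → H := fun n => pick (G n) (δ n)
  have hG : ∀ n, G n = penalized f μ x n := by
    intro n
    induction n with
    | zero => funext z; simp [G]
    | succ n ih => funext z; rw [penalized_succ, ← ih]
  refine ⟨x, fun n => ⟨hpickS _ _, ?_⟩⟩
  rw [← hG n]
  refine hpick _ _ ?_ (hδ n)
  obtain ⟨b, hb⟩ := hbdd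
  refine ⟨b, ?_⟩
  rintro _ ⟨z, hz, rfl⟩
  rw [hG n]
  exact (hb ⟨z, hz, rfl⟩).trans (by simpa using penalized_mono (x := x) hμ n.zero_le z)

namespace IsPenalizedNearMinSeq

variable {S : Set H}

lemma mul_norm_succ_sub_sq_le (hx : IsPenalizedNearMinSeq S f μ δ x) (n : ℕ) :
    μ n * ‖x (n + 1) - x n‖ ^ 2 ≤ δ n + δ (n + 1) := by
  have h₁ := (hx (n + 1)).2 (x n) (hx n).1
  have h₂ := (hx n).2 (x (n + 1)) (hx (n + 1)).1
  rw [penalized_succ, penalized_succ, sub_self, norm_zero] at h₁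
  linarith

lemma add_tsum_le_of_tendsto (hx : IsPenalizedNearMinSeq S f μ δ x) (hf : Continuous f)
    (hμ : ∀ n, 0 ≤ μ n) (hsum : ∀ z, Summable fun i => μ i * ‖z - x i‖ ^ 2)
    (hδ : Tendsto δ atTop (𝓝 0)) {x₀ : H} (hx₀ : Tendsto x atTop (𝓝 x₀)) {z : H} (hz : z ∈ S) :
    f x₀ + ∑' i, μ i * ‖x₀ - x i‖ ^ 2 ≤ f z + ∑' i, μ i * ‖z - x i‖ ^ 2 := by
  have hle : ∀ n, penalized f μ x n x₀ ≤ f z + ∑' i, μ i * ‖z - x i‖ ^ 2 := by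
    intro n
    have hcont : Continuous (penalized f μ x n) := by unfold penalized; fun_prop
    have hlim : Tendsto (fun m => f z + ∑' i, μ i * ‖z - x i‖ ^ 2 + δ m) atTop
        (𝓝 (f z + ∑' i, μ i * ‖z - x i‖ ^ 2)) := by
      simpa using tendsto_const_nhds.add hδ
    refine le_of_tendsto_of_tendsto ((hcont.tendsto x₀).comp hx₀) hlim ?_
    filter_upwards [eventually_ge_atTop n] with m hm
    calc penalized f μ x n (x m) ≤ penalized f μ x m (x m) := penalized_mono hμ hm _
      _ ≤ penalized f μ x m z + δ m := (hx m).2 z hz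
      _ ≤ _ := by gcongr; exact penalized_le_add_tsum hμ (hsum z) m
  exact le_of_tendsto ((hsum x₀).hasSum.tendsto_sum_nat.const_add (f x₀))
    (Eventually.of_forall hle)

end IsPenalizedNearMinSeq

end Penalization

section Hilbert

variable {H : Type*} [NormedAddCommGroup H] [InnerProductSpace ℝ H]

lemma HasSum.mul_norm_sub_sq {ι : Type*} {μ : ι → ℝ} {x : ι → H} {y v : H} {a M : ℝ}
    (ha : HasSum (fun i => μ i * ‖y - x i‖ ^ 2) a) (hM : HasSum μ M)
    (hv : HasSum (fun i => μ i • (y - x i)) v) (z : H) :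
    HasSum (fun i => μ i * ‖z - x i‖ ^ 2) (a + 2 * ⟪z - y, v⟫ + M * ‖z - y‖ ^ 2) := by
  have hinner : HasSum (fun i => ⟪z - y, μ i • (y - x i)⟫) ⟪z - y, v⟫ :=
    (innerSL ℝ (z - y)).hasSum hv
  convert (ha.add (hinner.mul_left 2)).add (hM.mul_right (‖z - y‖ ^ 2)) using 1
  funext i
  rw [show z - x i = (z - y) + (y - x i) by abel, norm_add_sq_real, inner_smul_right]
  ring

/-- The Borwein–Preiss smooth variational principle, with the squared norm as gauge. -/
theorem exists_le_add_inner_add_mul_norm_sq [CompleteSpace H] {S : Set H} (hS : IsClosed S)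
    (hne : S.Nonempty) {f : H → ℝ} (hf : Continuous f) (hbdd : BddBelow (f '' S)) {ε : ℝ}
    (hε : 0 < ε) : ∃ x ∈ S, ∃ v : H, ‖v‖ ≤ ε ∧ ∃ M : ℝ, 0 ≤ M ∧
      ∀ z ∈ S, f x ≤ f z + 2 * ⟪v, z - x⟫ + M * ‖z - x‖ ^ 2 := by
  set μ : ℕ → ℝ := fun n => ε / 4 * (1 / 2) ^ n with hμ_def
  -- `δ n = μ n * (1 / 4) ^ n / 2`, which forces `‖x (n + 1) - x n‖ ≤ (1 / 2) ^ n`.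
  set δ : ℕ → ℝ := fun n => ε / 8 * (1 / 8) ^ n with hδ_def
  have hμ : ∀ n, 0 < μ n := fun n => by positivity
  have hμ_sum : HasSum μ (ε / 2) := by
    have h := hasSum_geometric_two.mul_left (ε / 4)
    rwa [show ε / 4 * 2 = ε / 2 by ring] at h
  obtain ⟨x, hx⟩ := exists_isPenalizedNearMinSeq hne hbdd (fun n => (hμ n).le)
    (fun n => by positivity : ∀ n, 0 < δ n)
  have hstep : ∀ n, dist (x n) (x (n + 1)) ≤ 1 * (1 / 2) ^ n := by
    intro n
    have h := hx.mul_norm_succ_sub_sq_le n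
    have hδμ : δ n + δ (n + 1) ≤ μ n * ((1 / 2) ^ n) ^ 2 := by
      have h8 : (1 / 8 : ℝ) ^ n = (1 / 2) ^ n * ((1 / 2) ^ n) ^ 2 := by
        rw [sq, ← mul_pow, ← mul_pow]; norm_num
      have hpos : 0 ≤ ε * ((1 / 2 : ℝ) ^ n * ((1 / 2) ^ n) ^ 2) := by positivity
      simp only [hμ_def, hδ_def, pow_succ, h8]
      nlinarith
    rw [dist_comm, dist_eq_norm, one_mul]
    exact (pow_le_pow_iff_left₀ (norm_nonneg _) (by positivity) two_ne_zero).1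
      (le_of_mul_le_mul_left (h.trans hδμ) (hμ n))
  obtain ⟨x₀, hx₀⟩ := cauchySeq_tendsto_of_complete
    (cauchySeq_of_le_geometric (1 / 2) 1 (by norm_num) hstep)
  have hx₀S : x₀ ∈ S := hS.mem_of_tendsto hx₀ (Eventually.of_forall fun n => (hx n).1)
  have hdist : ∀ n, ‖x₀ - x n‖ ≤ 2 := by
    intro n
    have h := dist_le_of_le_geometric_of_tendsto (1 / 2) 1 (by norm_num) hstep hx₀ n
    have : ((1 : ℝ) / 2) ^ n ≤ 1 := pow_le_one₀ (by norm_num) (by norm_num)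
    calc ‖x₀ - x n‖ = dist (x n) x₀ := by rw [dist_comm, dist_eq_norm]
      _ ≤ 1 * (1 / 2) ^ n / (1 - 1 / 2) := h
      _ = 2 * (1 / 2) ^ n := by ring
      _ ≤ 2 := by linarith
  have hv : Summable fun i => μ i • (x₀ - x i) := by
    refine Summable.of_norm_bounded (hμ_sum.summable.mul_left 2) fun i => ?_
    rw [norm_smul, Real.norm_of_nonneg (hμ i).le, mul_comm 2]
    exact mul_le_mul_of_nonneg_left (hdist i) (hμ i).le
  have hP : Summable fun i => μ i * ‖x₀ - x i‖ ^ 2 := by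
    refine Summable.of_nonneg_of_le (fun i => by positivity) (fun i => ?_)
      (hμ_sum.summable.mul_right (2 ^ 2))
    gcongr
    exact hdist i
  have hexpand := hP.hasSum.mul_norm_sub_sq hμ_sum hv.hasSum
  have hδ : Tendsto δ atTop (𝓝 0) := by
    have h := (tendsto_pow_atTop_nhds_zero_of_lt_one (by norm_num : (0 : ℝ) ≤ 1 / 8)
      (by norm_num)).const_mul (ε / 8)
    rwa [mul_zero] at h
  refine ⟨x₀, hx₀S, ∑' i, μ i • (x₀ - x i), ?_, ε / 2, by positivity, fun z hz => ?_⟩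
  · calc ‖∑' i, μ i • (x₀ - x i)‖ ≤ ε / 2 * 2 := by
          refine tsum_of_norm_bounded (hμ_sum.mul_right 2) fun i => ?_
          rw [norm_smul, Real.norm_of_nonneg (hμ i).le]
          exact mul_le_mul_of_nonneg_left (hdist i) (hμ i).le
      _ = ε := by ring
  · have h := hx.add_tsum_le_of_tendsto hf (fun n => (hμ n).le)
      (fun z => (hexpand z).summable) hδ hx₀ hz
    rw [(hexpand z).tsum_eq] at h
    rw [real_inner_comm (z - x₀)]
    linarith

theorem exists_ne_zero_mem_proxNormalCone [CompleteSpace H] {S : Set H} (hS : IsClosed S)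
    (hne : S.Nonempty) {y : H} (hy : y ∉ S) : ∃ x ∈ S, ∃ ζ ≠ 0, ζ ∈ proxNormalCone S x := by
  have hd : 0 < infDist y S := (hS.notMem_iff_infDist_pos hne).1 hy
  obtain ⟨x, hxS, v, hv, M, hM, hmin⟩ := exists_le_add_inner_add_mul_norm_sq hS hne
    (f := fun z => ‖y - z‖ ^ 2) (by fun_prop) ⟨0, by rintro _ ⟨z, -, rfl⟩; positivity⟩
    (half_pos hd)
  refine ⟨x, hxS, y - x - v, fun h => ?_, (1 + M) / 2, by positivity, fun z hz => ?_⟩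
  · have hyx : infDist y S ≤ ‖y - x‖ := dist_eq_norm y x ▸ infDist_le_dist_of_mem hxS
    rw [sub_eq_zero.1 h] at hyx
    linarith
  · have hexpand : ‖y - z‖ ^ 2 = ‖y - x‖ ^ 2 - 2 * ⟪y - x, z - x⟫ + ‖z - x‖ ^ 2 := by
      rw [show y - z = (y - x) - (z - x) by abel, norm_sub_sq_real]
    have h := hmin z hz
    simp only [hexpand] at h
    rw [inner_sub_left]
    linarith

theorem UniformProxRegular.disjoint_ball {ρ : ℝ} (hρ : 0 < ρ) {S : Set H}
    (hpr : UniformProxRegular ρ S) {x ζ : H} (hx : x ∈ S) (hζ : ζ ≠ 0)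
    (hN : ζ ∈ proxNormalCone S x) : Disjoint (ball (x + (ρ / ‖ζ‖) • ζ) ρ) S := by
  refine Set.disjoint_right.2 fun z hz hzb => ?_
  have hζpos : 0 < ‖ζ‖ := norm_pos_iff.2 hζ
  have hineq := hpr x hx ζ hN z hz
  have hsq : ‖z - (x + (ρ / ‖ζ‖) • ζ)‖ ^ 2
      = ‖z - x‖ ^ 2 - 2 * (ρ / ‖ζ‖) * ⟪ζ, z - x⟫ + ρ ^ 2 := by
    rw [show z - (x + (ρ / ‖ζ‖) • ζ) = (z - x) - (ρ / ‖ζ‖) • ζ by abel, norm_sub_sq_real,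
      inner_smul_right, norm_smul, Real.norm_of_nonneg (by positivity), real_inner_comm]
    field_simp
  have hcoef : 2 * (ρ / ‖ζ‖) * ⟪ζ, z - x⟫ ≤ ‖z - x‖ ^ 2 := by
    calc 2 * (ρ / ‖ζ‖) * ⟪ζ, z - x⟫ ≤ 2 * (ρ / ‖ζ‖) * (‖ζ‖ / (2 * ρ) * ‖z - x‖ ^ 2) := by
          gcongr
      _ = ‖z - x‖ ^ 2 := by field_simp
  have hlt : ‖z - (x + (ρ / ‖ζ‖) • ζ)‖ ^ 2 < ρ ^ 2 := by
    rw [mem_ball, dist_eq_norm] at hzb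
    exact pow_lt_pow_left₀ hzb (norm_nonneg _) two_ne_zero
  linarith

theorem UniformProxRegular.eq_univ_of_forall_exists_dist_lt [CompleteSpace H] {ρ : ℝ}
    (hρ : 0 < ρ) {S : Set H} (hS : IsClosed S) (hpr : UniformProxRegular ρ S)
    (hdense : ∀ p, ∃ z ∈ S, dist p z < ρ) : S = univ := by
  refine eq_univ_of_forall fun y => by_contra fun hy => ?_
  obtain ⟨z₀, hz₀, -⟩ := hdense y
  obtain ⟨x, hx, ζ, hζ, hN⟩ := exists_ne_zero_mem_proxNormalCone hS ⟨z₀, hz₀⟩ hy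
  obtain ⟨z, hz, hdist⟩ := hdense (x + (ρ / ‖ζ‖) • ζ)
  exact Set.disjoint_right.1 (hpr.disjoint_ball hρ hx hζ hN) hz (mem_ball'.2 hdist)

end Hilbert

theorem IsPreconnected.subset_of_forall_dist_lt {α : Type*} [PseudoMetricSpace α] {s A : Set α}
    (hs : IsPreconnected s) {δ : ℝ} (hδ : 0 < δ) (hA : (s ∩ A).Nonempty)
    (h : ∀ t ∈ s ∩ A, ∀ u ∈ s, dist u t < δ → u ∈ A) : s ⊆ A := by
  intro u hu
  by_contra huA
  obtain ⟨w, hws, hwA, hwB⟩ := hs (⋃ t ∈ s ∩ A, ball t δ) (⋃ t ∈ s \ A, ball t δ)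
    (isOpen_biUnion fun _ _ => isOpen_ball) (isOpen_biUnion fun _ _ => isOpen_ball)
    (fun w hw => by
      by_cases hwA : w ∈ A
      · exact Or.inl (mem_biUnion ⟨hw, hwA⟩ (mem_ball_self hδ))
      · exact Or.inr (mem_biUnion ⟨hw, hwA⟩ (mem_ball_self hδ)))
    (by obtain ⟨t, ht⟩ := hA; exact ⟨t, ht.1, mem_biUnion ht (mem_ball_self hδ)⟩)
    ⟨u, hu, mem_biUnion ⟨hu, huA⟩ (mem_ball_self hδ)⟩
  obtain ⟨t, ht, hwt⟩ := mem_iUnion₂.1 hwA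
  obtain ⟨t', ht', hwt'⟩ := mem_iUnion₂.1 hwB
  have hw : w ∈ A := h t ht w hws hwt
  exact ht'.2 (h w ⟨hws, hw⟩ t' ht'.1 (mem_ball'.1 hwt'))

theorem stmt2_general {H : Type*} [NormedAddCommGroup H] [InnerProductSpace ℝ H] [CompleteSpace H]
    (T : ℝ) (C : ℝ → Set H)
    (hclosed : ∀ t ∈ Icc (0:ℝ) T, IsClosed (C t))
    (hH : HausdorffCts T C)
    (ρ : ℝ) (hρ : 0 < ρ)
    (hpr : ∀ t ∈ Icc (0:ℝ) T, UniformProxRegular ρ (C t))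
    (t₀ : ℝ) (ht₀ : t₀ ∈ Icc (0:ℝ) T) (hall : C t₀ = univ) :
    ∀ t ∈ Icc (0:ℝ) T, C t = univ := by
  obtain ⟨δ, hδ, hCδ⟩ := hH ρ hρ
  have hspread : ∀ t ∈ Icc 0 T ∩ {t | C t = univ}, ∀ s ∈ Icc 0 T, dist s t < δ →
      s ∈ {t | C t = univ} := by
    rintro t ⟨ht, hCt⟩ s hs hst
    refine (hpr s hs).eq_univ_of_forall_exists_dist_lt hρ (hclosed s hs) fun p => ?_
    rw [dist_comm, Real.dist_eq] at hst
    obtain ⟨z, hz, hpz⟩ :=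
      exists_edist_lt_of_hausdorffEDist_lt (hCt ▸ mem_univ p) (hCδ t ht s hs hst)
    exact ⟨z, hz, edist_lt_ofReal.1 hpz⟩
  exact fun t ht => isPreconnected_Icc.subset_of_forall_dist_lt hδ ⟨t₀, ht₀, hall⟩ hspread ht

theorem stmt2 {H : Type*} [NormedAddCommGroup H] [InnerProductSpace ℝ H] [CompleteSpace H]
    (T : ℝ) (hT : 0 < T) (C : ℝ → Set H)
    (hclosed : ∀ t ∈ Icc (0:ℝ) T, IsClosed (C t))
    (hH : HausdorffCts T C)
    (ρ : ℝ) (hρ : 0 < ρ)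
    (hpr : ∀ t ∈ Icc (0:ℝ) T, UniformProxRegular ρ (C t))
    (t₀ : ℝ) (ht₀ : t₀ ∈ Icc (0:ℝ) T) (hall : C t₀ = univ) :
    ∀ t ∈ Icc (0:ℝ) T, C t = univ :=
  stmt2_general T C hclosed hH ρ hρ hpr t₀ ht₀ hall
end

section
/- Let H be a real Hilbert space and C : [0,T] ⇉ H a set-valued map satisfying conditions (H1) and (H2). Then the boundary map t ⇉ bd C(t) is Hausdorff-continuous on its domain: for every t ∈ [0,T] with bd C(t) ≠ ∅ and every ε > 0, there exists δ > 0 such that d_H(bd C(s), bd C(t)) < ε for every s ∈ [0,T] with |s − t| < δ and bd C(s) ≠ ∅. -/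
/-!
Let `d_H(A, B) < r ≤ ρ` with `A` closed and `ρ`-uniformly prox-regular. Every boundary point `x`
of `A` lies within `2r` of the boundary of `B`: if `x ∉ B`, walk from `x` towards a point of `B`
at distance `< r` until the boundary of `B` is crossed; if `x ∈ B`, it suffices to find a point
outside `B` within `2r` of `x`. Such a point is the centre of an exterior ball of `A`: near `x`
there are points `v ∉ A` with a nearest point `p ∈ A` (in a Hilbert space these are dense in the
complement of a closed set, as limits of points moved towards their approximate projections),
`v - p` is a proximal normal at `p`, and prox-regularity makes the open ball of radius `r` centred
at `p + r (v - p) / ‖v - p‖` disjoint from `A`. That centre is not in `B`, since every point of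
`B` is within `r` of `A`. Applied to `C(s)` and `C(t)` in both directions, with `r` small, this
bounds the Hausdorff distance of their boundaries by `2r`.
-/

open Set Metric
open scoped ENNReal

open Filter Topology

theorem exists_mem_frontier_dist_le {E : Type*} [NormedAddCommGroup E] [NormedSpace ℝ E]
    {s : Set E} {x y : E} (hx : x ∈ s) (hy : y ∉ s) :
    ∃ z ∈ frontier s, dist x z ≤ dist x y := by
  suffices ∃ z ∈ segment ℝ x y, z ∈ frontier s by
    obtain ⟨z, hzxy, hz⟩ := this
    exact ⟨z, hz, by
      linarith [dist_add_dist_of_mem_segment hzxy, dist_nonneg (x := z) (y := y)]⟩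
  by_contra! h
  have hsub : segment ℝ x y ⊆ interior s ∪ (closure s)ᶜ := fun z hz => by
    by_cases hzs : z ∈ closure s
    · exact Or.inl (by_contra fun hzi => h z hz ⟨hzs, hzi⟩)
    · exact Or.inr hzs
  have hxs : x ∈ interior s :=
    (hsub (left_mem_segment ℝ x y)).resolve_right (not_not.mpr (subset_closure hx))
  have := (convex_segment x y).isPreconnected.subset_left_of_subset_union isOpen_interior
    isClosed_closure.isOpen_compl (disjoint_compl_right.mono_left interior_subset_closure) hsub
    ⟨x, left_mem_segment ℝ x y, hxs⟩
  exact hy (interior_subset (this (right_mem_segment ℝ x y)))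

theorem exists_seq_of_forall_exists_succ {α : Type*} {I : ℕ → α → Prop}
    {R : ℕ → α → α → Prop} {a : α} (h₀ : I 0 a)
    (h : ∀ n x, I n x → ∃ y, I (n + 1) y ∧ R n x y) :
    ∃ f : ℕ → α, ∀ n, I n (f n) ∧ R n (f n) (f (n + 1)) := by
  choose g hg using h
  let F : (n : ℕ) → {x // I n x} :=
    fun n => Nat.rec ⟨a, h₀⟩ (fun n x => ⟨g n x x.2, (hg n x x.2).1⟩) n
  exact ⟨fun n => (F n).1, fun n => ⟨(F n).2, (hg n _ (F n).2).2⟩⟩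

theorem dist_le_of_tendsto_of_approx {α : Type*} [PseudoMetricSpace α]
    {Y p : ℕ → α} {θ : ℕ → ℝ} {v q c : α} (hY : Tendsto Y atTop (𝓝 v))
    (hp : Tendsto p atTop (𝓝 q)) (hθ : Tendsto θ atTop (𝓝 0))
    (happrox : ∀ n, dist (Y n) (p n) ≤ dist (Y n) c + θ n) : dist v q ≤ dist v c := by
  have hlim := (hY.dist (tendsto_const_nhds (x := c))).add hθ
  rw [add_zero] at hlim
  exact le_of_tendsto_of_tendsto' (hY.dist hp) hlim happrox

section Hilbert

variable {H : Type*} [NormedAddCommGroup H] [InnerProductSpace ℝ H]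

theorem sub_mem_proxNormalCone {C : Set H} {v p : H} (hp : ∀ c ∈ C, dist v p ≤ dist v c) :
    v - p ∈ proxNormalCone C p := by
  refine ⟨1 / 2, by norm_num, fun c hc => ?_⟩
  have hvc : ‖v - c‖ ^ 2 = ‖v - p‖ ^ 2 - 2 * inner ℝ (v - p) (c - p) + ‖c - p‖ ^ 2 := by
    rw [← norm_sub_sq_real, sub_sub_sub_cancel_right]
  have := hp c hc
  rw [dist_eq_norm, dist_eq_norm] at this
  nlinarith [norm_nonneg (v - p)]

theorem UniformProxRegular.disjoint_ball_s5 {ρ r : ℝ} {C : Set H} (hC : UniformProxRegular ρ C)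
    {p ζ : H} (hp : p ∈ C) (hζ : ζ ∈ proxNormalCone C p) (hζ0 : ζ ≠ 0) (hr : 0 < r)
    (hrρ : r ≤ ρ) : Disjoint (ball (p + (r / ‖ζ‖) • ζ) r) C := by
  rw [Set.disjoint_left]
  intro c hc hcC
  rw [mem_ball', dist_eq_norm] at hc
  have hζpos : 0 < ‖ζ‖ := norm_pos_iff.mpr hζ0
  have hnorm : ‖p + (r / ‖ζ‖) • ζ - c‖ ^ 2
      = r ^ 2 - 2 * (r / ‖ζ‖) * inner ℝ ζ (c - p) + ‖c - p‖ ^ 2 := by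
    rw [show p + (r / ‖ζ‖) • ζ - c = (r / ‖ζ‖) • ζ - (c - p) by abel, norm_sub_sq_real,
      real_inner_smul_left, norm_smul, Real.norm_of_nonneg (by positivity), div_mul_cancel₀ _
      hζpos.ne']
    ring
  have hinner : (r / ‖ζ‖) * inner ℝ ζ (c - p) ≤ r / (2 * ρ) * ‖c - p‖ ^ 2 := by
    calc (r / ‖ζ‖) * inner ℝ ζ (c - p) ≤ (r / ‖ζ‖) * (‖ζ‖ / (2 * ρ) * ‖c - p‖ ^ 2) :=
          mul_le_mul_of_nonneg_left (hC p hp ζ hζ c hcC) (by positivity)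
      _ = r / (2 * ρ) * ‖c - p‖ ^ 2 := by field_simp
  have hrρ' : r / (2 * ρ) ≤ 1 / 2 := by
    rw [div_le_div_iff₀ (by linarith) (by norm_num)]; linarith
  nlinarith [norm_nonneg (p + (r / ‖ζ‖) • ζ - c), sq_nonneg ‖c - p‖,
    mul_le_mul_of_nonneg_right hrρ' (sq_nonneg ‖c - p‖)]

open AffineMap in
/- Eliminating `⟪q - y, p - y⟫` between the expansions of `‖q - p‖²` and `‖q - w‖²`, for
`w = lineMap y p (t / a)`, leaves `t ‖q - p‖² ≤ 4a²θ - 4aθt + tθ²`. -/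
theorem sq_dist_le_of_dist_lineMap_le {y p q : H} {t θ : ℝ} (ht : 0 < t) (htp : t ≤ dist y p)
    (hθ : 0 ≤ θ) (hθp : θ ≤ dist y p) (hq : dist y p - θ ≤ dist y q)
    (hq' : dist (lineMap y p (t / dist y p)) q ≤ dist y p - t + θ) :
    dist p q ^ 2 ≤ 5 * dist y p ^ 2 * θ / t := by
  set a := dist y p
  have ha : 0 < a := ht.trans_le htp
  have hpy : ‖p - y‖ = a := by rw [← dist_eq_norm, dist_comm]
  have hpq : dist p q ^ 2 = ‖q - y‖ ^ 2 - 2 * inner ℝ (q - y) (p - y) + a ^ 2 := by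
    rw [dist_comm, dist_eq_norm, show q - p = (q - y) - (p - y) by abel, norm_sub_sq_real, hpy]
  have hwq : a * dist (lineMap y p (t / a)) q ^ 2
      = a * ‖q - y‖ ^ 2 - 2 * t * inner ℝ (q - y) (p - y) + a * t ^ 2 := by
    rw [dist_comm, dist_eq_norm, lineMap_apply_module',
      show q - ((t / a) • (p - y) + y) = (q - y) - (t / a) • (p - y) by abel, norm_sub_sq_real,
      real_inner_smul_right, norm_smul, Real.norm_of_nonneg (by positivity), hpy]
    field_simp
  have hq2 : (a - θ) ^ 2 ≤ ‖q - y‖ ^ 2 := by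
    rw [← dist_eq_norm, dist_comm]; exact pow_le_pow_left₀ (by linarith) hq 2
  have hq'2 : dist (lineMap y p (t / a)) q ^ 2 ≤ (a - t + θ) ^ 2 :=
    pow_le_pow_left₀ dist_nonneg hq' 2
  rw [le_div_iff₀ ht]
  nlinarith [mul_le_mul_of_nonneg_left hq'2 ha.le,
    mul_le_mul_of_nonneg_left hq2 (sub_nonneg.mpr htp),
    mul_nonneg (mul_nonneg ht.le hθ) (sub_nonneg.mpr hθp),
    mul_nonneg (mul_nonneg ha.le hθ) ht.le, mul_nonneg (mul_nonneg hθ hθ) (sub_nonneg.mpr htp)]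

open AffineMap in
theorem exists_step_approx_nearest {C : Set H} {y p : H} {t θ θ' : ℝ} (hp : p ∈ C)
    (hpy : dist y p < infDist y C + θ) (ht : 0 < t) (htC : t ≤ infDist y C) (hθt : θ ≤ t)
    (hθ' : 0 < θ') (hθ'θ : θ' ≤ θ) :
    ∃ w, dist y w = t ∧ ∃ q ∈ C, dist w q < infDist w C + θ' ∧
      dist p q ^ 2 ≤ 5 * dist y p ^ 2 * θ / t := by
  set a := dist y p
  have hta : t ≤ a := htC.trans (infDist_le_dist_of_mem hp)
  have ha : 0 < a := ht.trans_le hta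
  set w := lineMap y p (t / a)
  have hyw : dist y w = t := by
    rw [dist_left_lineMap, Real.norm_of_nonneg (div_pos ht ha).le, div_mul_cancel₀ _ ha.ne']
  have hwp : dist w p = a - t := by
    rw [dist_lineMap_right, Real.norm_of_nonneg (sub_nonneg.mpr ((div_le_one ha).mpr hta)),
      sub_mul, div_mul_cancel₀ _ ha.ne', one_mul]
  obtain ⟨q, hqC, hq⟩ := (infDist_lt_iff ⟨p, hp⟩).mp (lt_add_of_pos_right (infDist w C) hθ')
  refine ⟨w, hyw, q, hqC, hq, sq_dist_le_of_dist_lineMap_le ht hta (hθ'.le.trans hθ'θ)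
    (hθt.trans hta) ?_ ?_⟩
  · linarith [infDist_le_dist_of_mem (x := y) hqC]
  · linarith [infDist_le_dist_of_mem (x := w) hp]

/- `Y (n + 1)` is `Y n` moved by `t n = τ / 2 ^ n` towards a `θ n`-approximate projection `p n`.
Since `θ n / t n = 4⁻ⁿ / 8`, `sq_dist_le_of_dist_lineMap_le` keeps consecutive approximate
projections `O(2⁻ⁿ)` apart. -/
theorem exists_approx_nearest_seq {C : Set H} (hC : C.Nonempty) {y : H} {τ : ℝ} (hτ : 0 < τ)
    (hτC : 4 * τ ≤ infDist y C) :
    ∃ Y p : ℕ → H, ∀ n, p n ∈ C ∧ dist (Y n) (p n) < infDist (Y n) C + τ / (8 * (2 ^ n) ^ 3) ∧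
      dist (Y n) y ≤ 2 * τ ∧ dist (Y n) (Y (n + 1)) ≤ τ / 2 ^ n ∧
      dist (p n) (p (n + 1)) ≤ 2 * infDist y C / 2 ^ n := by
  set D := infDist y C
  set θ : ℕ → ℝ := fun n => τ / (8 * (2 ^ n) ^ 3) with hθ_def
  set t : ℕ → ℝ := fun n => τ / 2 ^ n with ht_def
  have ht : ∀ n, 0 < t n := fun n => by positivity
  have hθ : ∀ n, 0 < θ n := fun n => by positivity
  have hθt : ∀ n, θ n ≤ t n := fun n => by
    simp only [hθ_def, ht_def]
    gcongr
    have h1 : (1 : ℝ) ≤ 2 ^ n := one_le_pow₀ one_le_two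
    linarith [le_self_pow₀ h1 three_ne_zero]
  have hθ_succ : ∀ n, θ (n + 1) ≤ θ n := fun n => by
    simp only [hθ_def, pow_succ]
    gcongr <;> linarith [pow_pos (two_pos (α := ℝ)) n]
  have ht_succ : ∀ n, 2 * t (n + 1) = t n := fun n => by
    simp only [ht_def, pow_succ]
    field_simp
  have hratio : ∀ n, 5 * (2 * D) ^ 2 * θ n / t n ≤ (2 * D / 2 ^ n) ^ 2 := fun n => by
    simp only [hθ_def, ht_def]
    rw [div_le_iff₀ (by positivity)]
    field_simp
    nlinarith [sq_nonneg D, pow_pos (two_pos (α := ℝ)) n]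
  obtain ⟨p₀, hp₀, hp₀y⟩ := (infDist_lt_iff hC).mp (lt_add_of_pos_right D (hθ 0))
  refine (exists_seq_of_forall_exists_succ
    (I := fun n x => x.2 ∈ C ∧ dist x.1 x.2 < infDist x.1 C + θ n ∧ dist x.1 y + 2 * t n ≤ 2 * τ)
    (R := fun n x x' => dist x.1 x'.1 ≤ t n ∧ dist x.2 x'.2 ≤ 2 * D / 2 ^ n) (a := (y, p₀))
    ⟨hp₀, hp₀y, by simp [t]⟩ ?_).elim fun f hf => ⟨fun n => (f n).1, fun n => (f n).2, fun n =>
      ⟨(hf n).1.1, (hf n).1.2.1, by linarith [(hf n).1.2.2, ht n], (hf n).2.1, (hf n).2.2⟩⟩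
  rintro n ⟨Y, p⟩ ⟨hp, hYp, hYy⟩
  dsimp only at hp hYp hYy ⊢
  have hDY : D ≤ infDist Y C + dist Y y := by
    rw [dist_comm]; exact infDist_le_infDist_add_dist
  have hYD : infDist Y C ≤ D + dist Y y := infDist_le_infDist_add_dist
  have htC : t n ≤ infDist Y C := by linarith [ht n]
  obtain ⟨w, hYw, q, hq, hwq, hpq⟩ :=
    exists_step_approx_nearest hp hYp (ht n) htC (hθt n) (hθ (n + 1)) (hθ_succ n)
  refine ⟨(w, q), ⟨hq, hwq, ?_⟩, hYw.le, ?_⟩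
  · linarith [dist_triangle w Y y, dist_comm w Y, ht_succ n]
  · have ha : dist Y p ≤ 2 * D := by linarith [hθt n, ht n]
    have hsq : dist p q ^ 2 ≤ (2 * D / 2 ^ n) ^ 2 :=
      hpq.trans ((by gcongr : 5 * dist Y p ^ 2 * θ n / t n ≤ 5 * (2 * D) ^ 2 * θ n / t n).trans
        (hratio n))
    exact (pow_le_pow_iff_left₀ dist_nonneg
      (div_nonneg (by linarith) (pow_nonneg zero_le_two n)) two_ne_zero).mp hsq

theorem IsClosed.exists_notMem_near_with_nearest [CompleteSpace H] {C : Set H}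
    (hC : IsClosed C) (hCne : C.Nonempty) {y : H} (hy : y ∉ C) {δ : ℝ} (hδ : 0 < δ) :
    ∃ v, dist v y ≤ δ ∧ v ∉ C ∧ ∃ p ∈ C, ∀ c ∈ C, dist v p ≤ dist v c := by
  set D := infDist y C
  have hD : 0 < D := (hC.notMem_iff_infDist_pos hCne).mp hy
  obtain ⟨τ, hτ, hτδ, hτD⟩ : ∃ τ > 0, 4 * τ ≤ δ ∧ 4 * τ ≤ D :=
    ⟨min δ D / 4, by positivity, by linarith [min_le_left δ D], by linarith [min_le_right δ D]⟩
  obtain ⟨Y, p, hYp⟩ := exists_approx_nearest_seq hCne hτ hτD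
  obtain ⟨v, hv⟩ := cauchySeq_tendsto_of_complete <|
    cauchySeq_of_le_geometric_two (C := 2 * τ) fun n => (hYp n).2.2.2.1.trans_eq (by ring)
  obtain ⟨q, hq⟩ := cauchySeq_tendsto_of_complete <|
    cauchySeq_of_le_geometric_two (C := 4 * D) fun n => (hYp n).2.2.2.2.trans_eq (by ring)
  have hvy : dist v y ≤ 2 * τ :=
    le_of_tendsto (hv.dist tendsto_const_nhds) (Eventually.of_forall fun n => (hYp n).2.2.1)
  have hθ : Tendsto (fun n : ℕ => τ / (8 * (2 ^ n) ^ 3)) atTop (𝓝 0) :=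
    tendsto_const_nhds.div_atTop <| Tendsto.const_mul_atTop (by norm_num) <|
      (tendsto_pow_atTop three_ne_zero).comp (tendsto_pow_atTop_atTop_of_one_lt one_lt_two)
  refine ⟨v, by linarith, fun hvC => ?_, q,
    hC.mem_of_tendsto hq (Eventually.of_forall fun n => (hYp n).1), fun c hc =>
      dist_le_of_tendsto_of_approx hv hq hθ fun n =>
        (hYp n).2.1.le.trans (add_le_add_left (infDist_le_dist_of_mem hc) _)⟩
  have := infDist_le_dist_of_mem (x := y) hvC
  rw [dist_comm] at this
  linarith

theorem UniformProxRegular.exists_disjoint_ball_near [CompleteSpace H] {ρ r η : ℝ}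
    {C : Set H} (hC : UniformProxRegular ρ C) (hCc : IsClosed C) {x : H} (hx : x ∈ frontier C)
    (hr : 0 < r) (hrρ : r ≤ ρ) (hη : 0 < η) : ∃ z, dist z x < r + η ∧ Disjoint (ball z r) C := by
  have hxC : x ∈ C := hCc.frontier_subset hx
  obtain ⟨y, hy, hxy⟩ := Metric.mem_closure_iff.mp
    (frontier_eq_closure_inter_closure.subset hx).2 (η / 4) (by positivity)
  obtain ⟨v, hvy, hvC, p, hp, hvp⟩ :=
    hCc.exists_notMem_near_with_nearest ⟨x, hxC⟩ hy (δ := η / 4) (by positivity)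
  have hvp0 : v - p ≠ 0 := sub_ne_zero.mpr fun h => hvC (h ▸ hp)
  refine ⟨p + (r / ‖v - p‖) • (v - p), ?_,
    hC.disjoint_ball_s5 hp (sub_mem_proxNormalCone hvp) hvp0 hr hrρ⟩
  have hzp : dist (p + (r / ‖v - p‖) • (v - p)) p = r := by
    rw [dist_eq_norm, add_sub_cancel_left, norm_smul, Real.norm_of_nonneg (by positivity),
      div_mul_cancel₀ _ (norm_ne_zero_iff.mpr hvp0)]
  have hpv : dist p v ≤ dist v x := by rw [dist_comm]; exact hvp x hxC
  linarith [dist_triangle4 (p + (r / ‖v - p‖) • (v - p)) p v x, dist_triangle v y x,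
    dist_comm x y]

theorem UniformProxRegular.exists_mem_frontier_dist_lt [CompleteSpace H] {ρ r : ℝ}
    {A B : Set H} (hA : UniformProxRegular ρ A) (hAc : IsClosed A) (hr : 0 < r) (hrρ : r ≤ ρ)
    (hAB : hausdorffEDist A B < ENNReal.ofReal r) {x : H} (hx : x ∈ frontier A) :
    ∃ f ∈ frontier B, dist x f < 2 * r := by
  by_cases hxB : x ∈ B
  · obtain ⟨w, hxw, hwB⟩ : ∃ w, dist x w < 2 * r ∧ w ∉ B := by
      by_contra! hball
      obtain ⟨z, hzx, hz⟩ := hA.exists_disjoint_ball_near hAc hx hr hrρ hr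
      obtain ⟨c, hcA, hzc⟩ := exists_edist_lt_of_hausdorffEDist_lt
        (hball z (by rw [dist_comm]; linarith)) (hausdorffEDist_comm.trans_lt hAB)
      exact Set.disjoint_left.mp hz (mem_ball'.mpr (edist_lt_ofReal.mp hzc)) hcA
    obtain ⟨f, hf, hxf⟩ := exists_mem_frontier_dist_le hxB hwB
    exact ⟨f, hf, hxf.trans_lt hxw⟩
  · obtain ⟨c, hcB, hxc⟩ := exists_edist_lt_of_hausdorffEDist_lt (hAc.frontier_subset hx) hAB
    obtain ⟨f, hf, hxf⟩ := exists_mem_frontier_dist_le (s := Bᶜ) hxB (not_not.mpr hcB)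
    rw [frontier_compl] at hf
    exact ⟨f, hf, hxf.trans_lt (by linarith [edist_lt_ofReal.mp hxc])⟩

theorem UniformProxRegular.hausdorffEDist_frontier_le [CompleteSpace H] {ρ r : ℝ}
    {A B : Set H} (hA : UniformProxRegular ρ A) (hAc : IsClosed A) (hB : UniformProxRegular ρ B)
    (hBc : IsClosed B) (hr : 0 < r) (hrρ : r ≤ ρ)
    (hAB : hausdorffEDist A B < ENNReal.ofReal r) :
    hausdorffEDist (frontier A) (frontier B) ≤ ENNReal.ofReal (2 * r) := by
  refine hausdorffEDist_le_of_infEDist (fun x hx => ?_) (fun x hx => ?_)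
  · obtain ⟨f, hf, hxf⟩ := hA.exists_mem_frontier_dist_lt hAc hr hrρ hAB hx
    exact (infEDist_le_edist_of_mem hf).trans (edist_lt_ofReal.mpr hxf).le
  · obtain ⟨f, hf, hxf⟩ :=
      hB.exists_mem_frontier_dist_lt hBc hr hrρ (hausdorffEDist_comm.trans_lt hAB) hx
    exact (infEDist_le_edist_of_mem hf).trans (edist_lt_ofReal.mpr hxf).le

end Hilbert

theorem stmt5_general {H : Type*} [NormedAddCommGroup H] [InnerProductSpace ℝ H] [CompleteSpace H]
    (T : ℝ) (C : ℝ → Set H)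
    (ρ : ℝ) (hρ : 0 < ρ)
    (hH1 : ∀ t ∈ Icc (0:ℝ) T, (C t).Nonempty ∧ IsClosed (C t) ∧ UniformProxRegular ρ (C t))
    (hH2 : HausdorffCts T C) :
    ∀ t ∈ Icc (0:ℝ) T, (frontier (C t)).Nonempty → ∀ ε > 0, ∃ δ > 0,
      ∀ s ∈ Icc (0:ℝ) T, |s - t| < δ → (frontier (C s)).Nonempty →
        EMetric.hausdorffEdist (frontier (C s)) (frontier (C t)) < ENNReal.ofReal ε := by
  intro t ht _ ε hε
  obtain ⟨r, hr, hrρ, hrε⟩ : ∃ r > 0, r ≤ ρ ∧ 2 * r < ε :=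
    ⟨min ρ (ε / 4), lt_min hρ (by linarith), min_le_left _ _,
      by linarith [min_le_right ρ (ε / 4)]⟩
  obtain ⟨δ, hδ, hCδ⟩ := hH2 r hr
  refine ⟨δ, hδ, fun s hs hst _ => ?_⟩
  obtain ⟨-, hsc, hsreg⟩ := hH1 s hs
  obtain ⟨-, htc, htreg⟩ := hH1 t ht
  calc hausdorffEDist (frontier (C s)) (frontier (C t)) ≤ ENNReal.ofReal (2 * r) :=
        hsreg.hausdorffEDist_frontier_le hsc htreg htc hr hrρ (hCδ s hs t ht hst)
    _ < ENNReal.ofReal ε := (ENNReal.ofReal_lt_ofReal_iff hε).mpr hrε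

theorem stmt5 {H : Type*} [NormedAddCommGroup H] [InnerProductSpace ℝ H] [CompleteSpace H]
    (T : ℝ) (hT : 0 < T) (C : ℝ → Set H)
    (ρ : ℝ) (hρ : 0 < ρ)
    (hH1 : ∀ t ∈ Icc (0:ℝ) T, (C t).Nonempty ∧ IsClosed (C t) ∧ UniformProxRegular ρ (C t))
    (hH2 : HausdorffCts T C) :
    ∀ t ∈ Icc (0:ℝ) T, (frontier (C t)).Nonempty → ∀ ε > 0, ∃ δ > 0,
      ∀ s ∈ Icc (0:ℝ) T, |s - t| < δ → (frontier (C s)).Nonempty →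
        EMetric.hausdorffEdist (frontier (C s)) (frontier (C t)) < ENNReal.ofReal ε :=
  stmt5_general T C ρ hρ hH1 hH2
end

section
/- Let H be a real Hilbert space, C ⊆ H a closed set, and x a point of the topological boundary of C. Suppose there exist r > 0, L > 0 and z ∈ H such that co({x} ∪ B_{2r}(z)) ⊆ C and ‖z − x‖ ≤ Lr, where B_{2r}(z) is the open ball of radius 2r centered at z and co denotes the convex hull. Then z ≠ x and, for every v ∈ N^P(C; x), one has ⟨v, (z − x)/‖z − x‖⟩ ≤ −‖v‖/L. -/
/-!
A proximal normal `v` at `x` satisfies `⟪v, y - x⟫ ≤ 0` whenever the segment `[x, y]` lies in `C`: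
the proximal inequality along the segment is `t ⟪v, y - x⟫ ≤ σ t² ‖y - x‖²`. Every point of
`B_{2r}(z)` is joined to `x` inside the convex hull, so maximising over the ball gives
`⟪v, z - x⟫ ≤ -2r‖v‖`, and `‖z - x‖ ≤ Lr` turns this into the bound on the unit direction.
The point `z` differs from `x` because otherwise a ball around `x` would lie in `C`.
-/

open Set Metric

open Filter Topology RealInnerProductSpace

section
variable {H : Type*} [NormedAddCommGroup H] [InnerProductSpace ℝ H]

theorem inner_le_zero_of_mem_proxNormalCone_of_segment_subset {S : Set H} {x y v : H}
    (hv : v ∈ proxNormalCone S x) (hseg : segment ℝ x y ⊆ S) : ⟪v, y - x⟫ ≤ 0 := by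
  obtain ⟨σ, -, hσ⟩ := hv
  have hlim : Tendsto (fun t : ℝ => σ * t * ‖y - x‖ ^ 2) (𝓝[>] 0) (𝓝 0) := by
    have : Continuous fun t : ℝ => σ * t * ‖y - x‖ ^ 2 := by fun_prop
    simpa using (this.tendsto 0).mono_left nhdsWithin_le_nhds
  refine ge_of_tendsto hlim ?_
  filter_upwards [Ioc_mem_nhdsGT one_pos] with t ⟨ht0, ht1⟩
  have hmem : x + t • (y - x) ∈ S :=
    hseg (segment_eq_image' ℝ x y ▸ mem_image_of_mem _ ⟨ht0.le, ht1⟩)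
  have h := hσ _ hmem
  rw [add_sub_cancel_left, real_inner_smul_right, norm_smul, Real.norm_eq_abs,
    abs_of_pos ht0] at h
  nlinarith

theorem inner_sub_add_mul_norm_le_zero_of_forall_mem_ball {v x z : H} {ρ : ℝ} (hρ : 0 < ρ)
    (h : ∀ y ∈ ball z ρ, ⟪v, y - x⟫ ≤ 0) : ⟪v, z - x⟫ + ρ * ‖v‖ ≤ 0 := by
  rcases eq_or_ne v 0 with rfl | hv
  · simp
  have hclosed : IsClosed {y | ⟪v, y - x⟫ ≤ 0} := isClosed_le (by fun_prop) (by fun_prop)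
  have hcl : closedBall z ρ ⊆ {y | ⟪v, y - x⟫ ≤ 0} :=
    closure_ball z hρ.ne' ▸ hclosed.closure_subset_iff.2 h
  have hy : z + (ρ / ‖v‖) • v ∈ closedBall z ρ := by
    rw [mem_closedBall, dist_self_add_left, norm_smul, Real.norm_of_nonneg (by positivity),
      div_mul_cancel₀ _ (norm_ne_zero_iff.2 hv)]
  have : ⟪v, z + (ρ / ‖v‖) • v - x⟫ ≤ 0 := hcl hy
  rwa [add_sub_right_comm, inner_add_right, real_inner_smul_right, real_inner_self_eq_norm_sq,
    div_mul_eq_mul_div, sq, mul_div_assoc, mul_self_div_self] at this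
end

theorem stmt8_general {H : Type*} [NormedAddCommGroup H] [InnerProductSpace ℝ H]
    (C : Set H) (x : H) (hx : x ∈ frontier C)
    (r L : ℝ) (hr : 0 < r) (hL : 0 < L) (z : H)
    (hco : convexHull ℝ ({x} ∪ ball z (2 * r)) ⊆ C)
    (hz : ‖z - x‖ ≤ L * r) :
    z ≠ x ∧ ∀ v ∈ proxNormalCone C x,
      (inner ℝ v (‖z - x‖⁻¹ • (z - x)) : ℝ) ≤ -‖v‖ / L := by
  have hball : ball z (2 * r) ⊆ C := fun y hy => hco (subset_convexHull ℝ _ (Or.inr hy))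
  have hzx : z ≠ x := by
    rintro rfl
    exact hx.2 (interior_maximal hball isOpen_ball (mem_ball_self (by positivity)))
  refine ⟨hzx, fun v hv => ?_⟩
  have hv_ball : ⟪v, z - x⟫ + 2 * r * ‖v‖ ≤ 0 :=
    inner_sub_add_mul_norm_le_zero_of_forall_mem_ball (by positivity) fun y hy =>
      inner_le_zero_of_mem_proxNormalCone_of_segment_subset hv <|
        (segment_subset_convexHull (mem_union_left _ (mem_singleton x))
          (mem_union_right _ hy)).trans hco
  have hd : 0 < ‖z - x‖ := norm_pos_iff.2 (sub_ne_zero.2 hzx)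
  have hdL : ‖z - x‖ / L ≤ r := div_le_of_le_mul₀ hL.le hr.le (by linarith)
  rw [real_inner_smul_right, inv_mul_le_iff₀ hd]
  calc ⟪v, z - x⟫ ≤ -(2 * r * ‖v‖) := by linarith
    _ ≤ -(‖z - x‖ / L * ‖v‖) := by gcongr; linarith
    _ = ‖z - x‖ * (-‖v‖ / L) := by ring

theorem stmt8 {H : Type*} [NormedAddCommGroup H] [InnerProductSpace ℝ H] [CompleteSpace H]
    (C : Set H) (hC : IsClosed C) (x : H) (hx : x ∈ frontier C)
    (r L : ℝ) (hr : 0 < r) (hL : 0 < L) (z : H)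
    (hco : convexHull ℝ ({x} ∪ ball z (2 * r)) ⊆ C)
    (hz : ‖z - x‖ ≤ L * r) :
    z ≠ x ∧ ∀ v ∈ proxNormalCone C x,
      (inner ℝ v (‖z - x‖⁻¹ • (z - x)) : ℝ) ≤ -‖v‖ / L :=
  stmt8_general C x hx r L hr hL z hco hz
end

section
/- Let H be a finite-dimensional real Hilbert space and C : [0,T] ⇉ H a set-valued map satisfying conditions (H1) and (H2). Let ξ̄ ∈ H, t̄ ∈ [0,T] and x̄ ∈ C(t̄). Then for all sequences ξ_n → ξ̄ in H, t_n → t̄ in [0,T], and x_n → x̄ with x_n ∈ C(t_n) for every n, one has limsup_{n→∞} σ(ξ_n; N^P(C(t_n); x_n) ∩ 𝕊) ≤ σ(ξ̄; N^P(C(t̄); x̄) ∩ 𝕊), where the support functions are understood in the extended reals. -/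
open Set Metric Filter
open scoped ENNReal Topology

/-- The support function of a set `A` at `ξ`, valued in the extended reals
(with `σ(ξ; ∅) = ⊥ = -∞`). -/
noncomputable def suppFn {H : Type*} [NormedAddCommGroup H] [InnerProductSpace ℝ H]
    (ξ : H) (A : Set H) : EReal :=
  ⨆ v ∈ A, ((inner ℝ ξ v : ℝ) : EReal)

/-!
Pick a subsequence along which the support functions stay above a level `r` and unit proximal
normals `ζₖ` nearly realising them. By compactness of the unit sphere the `ζₖ` converge to some
unit vector `ζ̄`. Every `y ∈ C(t̄)` is a limit of points `zₖ ∈ C(tₖ)` by Hausdorff continuity,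
and passing to the limit in the uniform prox-regularity inequality
`⟨ζₖ, zₖ - xₖ⟩ ≤ ‖ζₖ‖/(2ρ) ‖zₖ - xₖ‖²` shows `ζ̄ ∈ N^P(C(t̄); x̄)`. Hence `r ≤ ⟨ξ̄, ζ̄⟩`
is bounded by the support function at the limit.
-/

section SupportFunction

variable {H : Type*} [NormedAddCommGroup H] [InnerProductSpace ℝ H]

theorem le_suppFn {ξ v : H} {A : Set H} (hv : v ∈ A) :
    ((inner ℝ ξ v : ℝ) : EReal) ≤ suppFn ξ A :=
  le_biSup (fun v => ((inner ℝ ξ v : ℝ) : EReal)) hv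

theorem exists_mem_lt_inner_of_lt_suppFn {ξ : H} {A : Set H} {r : ℝ}
    (h : (r : EReal) < suppFn ξ A) : ∃ v ∈ A, r < (inner ℝ ξ v : ℝ) := by
  simp only [suppFn, lt_iSup_iff, EReal.coe_lt_coe_iff] at h
  simpa only [exists_prop] using h

/-- Upper semicontinuity of the support function along sets lying in a fixed compact set, with
respect to their sequential outer limit. -/
theorem limsup_suppFn_le {K : Set H} (hK : IsCompact K) {A : ℕ → Set H} (hAK : ∀ n, A n ⊆ K)
    {Abar : Set H}
    (hA : ∀ φ : ℕ → ℕ, StrictMono φ → ∀ (ζ : ℕ → H) (z : H),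
      (∀ k, ζ k ∈ A (φ k)) → Tendsto ζ atTop (𝓝 z) → z ∈ Abar)
    {ξ : ℕ → H} {ξbar : H} (hξ : Tendsto ξ atTop (𝓝 ξbar)) :
    limsup (fun n => suppFn (ξ n) (A n)) atTop ≤ suppFn ξbar Abar := by
  by_contra! hlt
  obtain ⟨r, hr_bar, hr_lim⟩ := EReal.exists_between_coe_real hlt
  obtain ⟨φ, hφ, hφr⟩ :=
    extraction_of_frequently_atTop (frequently_lt_of_lt_limsup isCobounded_le_of_bot hr_lim)
  choose ζ hζA hζr using fun k => exists_mem_lt_inner_of_lt_suppFn (hφr k)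
  obtain ⟨z, -, ψ, hψ, hζz⟩ := hK.tendsto_subseq fun k => hAK _ (hζA k)
  have hz : z ∈ Abar := hA (φ ∘ ψ) (hφ.comp hψ) (ζ ∘ ψ) z (fun k => hζA (ψ k)) hζz
  have hr : r ≤ (inner ℝ ξbar z : ℝ) :=
    ge_of_tendsto' ((hξ.comp (hφ.comp hψ).tendsto_atTop).inner hζz) fun k => (hζr (ψ k)).le
  exact hr_bar.not_ge ((EReal.coe_le_coe_iff.mpr hr).trans (le_suppFn hz))

end SupportFunction

theorem exists_seq_mem_tendsto_of_tendsto_hausdorffEDist {X : Type*} [PseudoMetricSpace X]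
    {s : Set X} {S : ℕ → Set X} (hS : ∀ n, (S n).Nonempty)
    (hlim : Tendsto (fun n => hausdorffEDist s (S n)) atTop (𝓝 0)) {y : X} (hy : y ∈ s) :
    ∃ z : ℕ → X, (∀ n, z n ∈ S n) ∧ Tendsto z atTop (𝓝 y) := by
  have hclose : ∀ n : ℕ, ∃ z ∈ S n, edist y z < infEDist y (S n) + (n : ℝ≥0∞)⁻¹ := fun n =>
    infEDist_lt_iff.mp <| ENNReal.lt_add_right (infEDist_ne_top (hS n))
      (ENNReal.inv_ne_zero.mpr (ENNReal.natCast_ne_top n))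
  choose z hzS hz using hclose
  refine ⟨z, hzS, tendsto_iff_edist_tendsto_0.mpr ?_⟩
  have hbound : Tendsto (fun n : ℕ => hausdorffEDist s (S n) + (n : ℝ≥0∞)⁻¹) atTop (𝓝 0) := by
    simpa using hlim.add ENNReal.tendsto_inv_nat_nhds_zero
  refine tendsto_of_tendsto_of_tendsto_of_le_of_le tendsto_const_nhds hbound (fun _ => zero_le)
    fun n => ?_
  rw [edist_comm]
  exact (hz n).le.trans (add_le_add_left (infEDist_le_hausdorffEDist_of_mem hy) _)

theorem HausdorffCts.tendsto_hausdorffEDist {X : Type*} [NormedAddCommGroup X] {T : ℝ}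
    {C : ℝ → Set X} (hC : HausdorffCts T C) {ι : Type*} {l : Filter ι} {t : ι → ℝ}
    (ht : ∀ i, t i ∈ Icc (0 : ℝ) T) {tbar : ℝ} (htbar : tbar ∈ Icc (0 : ℝ) T)
    (htlim : Tendsto t l (𝓝 tbar)) :
    Tendsto (fun i => hausdorffEDist (C tbar) (C (t i))) l (𝓝 0) := by
  refine ENNReal.tendsto_nhds_zero.mpr fun ε hε => ?_
  obtain ⟨r, -, hr0, hrε⟩ := ENNReal.lt_iff_exists_real_btwn.mp hε
  obtain ⟨δ, hδ, hCδ⟩ := hC r (ENNReal.ofReal_pos.mp hr0)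
  filter_upwards [Metric.tendsto_nhds.mp htlim δ hδ] with i hi
  rw [dist_comm, Real.dist_eq] at hi
  exact (hCδ _ htbar _ (ht i) hi).le.trans hrε.le

section ProxRegular

variable {H : Type*} [NormedAddCommGroup H] [InnerProductSpace ℝ H]

theorem mem_proxNormalCone_of_tendsto {ρ : ℝ} (hρ : 0 ≤ ρ) {S : ℕ → Set H}
    (hS : ∀ n, UniformProxRegular ρ (S n)) {x ζ : ℕ → H} (hx : ∀ n, x n ∈ S n)
    (hζ : ∀ n, ζ n ∈ proxNormalCone (S n) (x n)) {Sbar : Set H} {xbar ζbar : H}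
    (hxlim : Tendsto x atTop (𝓝 xbar)) (hζlim : Tendsto ζ atTop (𝓝 ζbar))
    (hSbar : ∀ y ∈ Sbar, ∃ z : ℕ → H, (∀ n, z n ∈ S n) ∧ Tendsto z atTop (𝓝 y)) :
    ζbar ∈ proxNormalCone Sbar xbar := by
  refine ⟨‖ζbar‖ / (2 * ρ), by positivity, fun y hy => ?_⟩
  obtain ⟨z, hzS, hzlim⟩ := hSbar y hy
  have hdiff : Tendsto (fun n => z n - x n) atTop (𝓝 (y - xbar)) := hzlim.sub hxlim
  exact le_of_tendsto_of_tendsto' (hζlim.inner hdiff)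
    ((hζlim.norm.div_const _).mul (hdiff.norm.pow 2))
    fun n => hS n _ (hx n) _ (hζ n) _ (hzS n)

end ProxRegular

theorem stmt9_general {H : Type*} [NormedAddCommGroup H] [InnerProductSpace ℝ H]
    [FiniteDimensional ℝ H]
    (T : ℝ) (C : ℝ → Set H)
    (ρ : ℝ) (hρ : 0 < ρ)
    (hH1 : ∀ t ∈ Icc (0:ℝ) T, (C t).Nonempty ∧ IsClosed (C t) ∧ UniformProxRegular ρ (C t))
    (hH2 : HausdorffCts T C)
    (ξbar : H) (tbar : ℝ) (htbar : tbar ∈ Icc (0:ℝ) T) (xbar : H)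
    (ξ : ℕ → H) (t : ℕ → ℝ) (x : ℕ → H)
    (ht : ∀ n, t n ∈ Icc (0:ℝ) T) (hx : ∀ n, x n ∈ C (t n))
    (hξlim : Tendsto ξ atTop (nhds ξbar))
    (htlim : Tendsto t atTop (nhds tbar))
    (hxlim : Tendsto x atTop (nhds xbar)) :
    limsup (fun n => suppFn (ξ n) (proxNormalCone (C (t n)) (x n) ∩ sphere (0:H) 1)) atTop ≤
      suppFn ξbar (proxNormalCone (C tbar) xbar ∩ sphere (0:H) 1) := by
  refine limsup_suppFn_le (isCompact_sphere 0 1) (fun n => inter_subset_right) ?_ hξlim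
  intro φ hφ ζ z hζ hζz
  have htφ : ∀ k, t (φ k) ∈ Icc (0 : ℝ) T := fun k => ht (φ k)
  have hCφ : Tendsto (fun k => hausdorffEDist (C tbar) (C (t (φ k)))) atTop (𝓝 0) :=
    hH2.tendsto_hausdorffEDist htφ htbar (htlim.comp hφ.tendsto_atTop)
  refine ⟨mem_proxNormalCone_of_tendsto hρ.le (fun k => (hH1 _ (htφ k)).2.2) (fun k => hx (φ k))
      (fun k => (hζ k).1) (hxlim.comp hφ.tendsto_atTop) hζz
      fun y hy => exists_seq_mem_tendsto_of_tendsto_hausdorffEDist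
        (fun k => (hH1 _ (htφ k)).1) hCφ hy,
    isClosed_sphere.mem_of_tendsto hζz (Eventually.of_forall fun k => (hζ k).2)⟩

theorem stmt9 {H : Type*} [NormedAddCommGroup H] [InnerProductSpace ℝ H]
    [FiniteDimensional ℝ H]
    (T : ℝ) (hT : 0 < T) (C : ℝ → Set H)
    (ρ : ℝ) (hρ : 0 < ρ)
    (hH1 : ∀ t ∈ Icc (0:ℝ) T, (C t).Nonempty ∧ IsClosed (C t) ∧ UniformProxRegular ρ (C t))
    (hH2 : HausdorffCts T C)
    (ξbar : H) (tbar : ℝ) (htbar : tbar ∈ Icc (0:ℝ) T) (xbar : H) (hxbar : xbar ∈ C tbar)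
    (ξ : ℕ → H) (t : ℕ → ℝ) (x : ℕ → H)
    (ht : ∀ n, t n ∈ Icc (0:ℝ) T) (hx : ∀ n, x n ∈ C (t n))
    (hξlim : Tendsto ξ atTop (nhds ξbar))
    (htlim : Tendsto t atTop (nhds tbar))
    (hxlim : Tendsto x atTop (nhds xbar)) :
    limsup (fun n => suppFn (ξ n) (proxNormalCone (C (t n)) (x n) ∩ sphere (0:H) 1)) atTop ≤
      suppFn ξbar (proxNormalCone (C tbar) xbar ∩ sphere (0:H) 1) :=
  stmt9_general T C ρ hρ hH1 hH2 ξbar tbar htbar xbar ξ t x ht hx hξlim htlim hxlim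
end

section
/- Let H be a finite-dimensional real Hilbert space and C : [0,T] ⇉ H a set-valued map satisfying conditions (H1), (H2), (H3) and (H4). Then C satisfies condition (H5). -/
open Set Metric
open scoped ENNReal

/-- Condition (H4) with constants `r, L`. -/
def CondH4 {H : Type*} [NormedAddCommGroup H] [InnerProductSpace ℝ H]
    (T : ℝ) (C : ℝ → Set H) (r L : ℝ) : Prop :=
  ∀ t ∈ Icc (0:ℝ) T, ∀ x ∈ frontier (C t), ∃ z : H,
    convexHull ℝ ({x} ∪ ball z (2 * r)) ⊆ C t ∧ ‖z - x‖ ≤ L * r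

/-- Condition (H5) with constants `δ, L`. -/
def CondH5 {H : Type*} [NormedAddCommGroup H] [InnerProductSpace ℝ H]
    (T : ℝ) (C : ℝ → Set H) (δ L : ℝ) : Prop :=
  ∀ t ∈ Icc (0:ℝ) T, ∀ x ∈ frontier (C t), ∃ ℓ : H, ‖ℓ‖ = 1 ∧
    ∀ y ∈ C t, ‖y - x‖ < δ → ∀ n ∈ proxNormalCone (C t) y, ‖n‖ = 1 →
      (inner ℝ ℓ n : ℝ) ≤ -(1 / L)

/-!
At a boundary point `x`, the cone condition gives a ball `B(z, 2r) ⊆ C(t)` with `2r ≤ ‖z - x‖ ≤ Lr`;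
take `ℓ` to be the direction from `x` to `z`. If `n` is a unit proximal normal at a point `y` close
to `x`, the point `w = x + θ (z + r n - x)` lies in the cone, hence in `C(t)`, and prox-regularity
bounds `⟪n, w - y⟫` by `‖w - y‖² / (2ρ)`. Expanding, `θ (⟪n, z - x⟫ + r)` is at most a quantity of
order `‖x - y‖ + θ²`, so for a small step `θ` and `‖y - x‖ ≪ θ r` we get `⟪n, z - x⟫ ≤ -r/2`,
i.e. `⟪ℓ, n⟫ ≤ -r / (2‖z - x‖) ≤ -1/(2L)`. All constants depend on `ρ, r, L` only.
-/

section

variable {H : Type*} [NormedAddCommGroup H] [InnerProductSpace ℝ H]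

lemma le_dist_of_ball_subset_of_mem_frontier {α : Type*} [PseudoMetricSpace α] {S : Set α}
    {x z : α} {R : ℝ} (hball : ball z R ⊆ S) (hx : x ∈ frontier S) : R ≤ dist x z :=
  not_lt.1 fun hxz => hx.2 (interior_maximal hball isOpen_ball (mem_ball.2 hxz))

lemma UniformProxRegular.inner_le_of_norm_eq_one {ρ : ℝ} {S : Set H} {y n w : H}
    (hS : UniformProxRegular ρ S) (hy : y ∈ S) (hn : n ∈ proxNormalCone S y) (hn1 : ‖n‖ = 1)
    (hw : w ∈ S) : inner ℝ n (w - y) ≤ ‖w - y‖ ^ 2 / (2 * ρ) := by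
  have := hS y hy n hn w hw
  rwa [hn1, one_div_mul_eq_div] at this

lemma UniformProxRegular.mul_inner_add_le {ρ r θ : ℝ} {S : Set H} {x y z n : H}
    (hS : UniformProxRegular ρ S) (hρ : 0 ≤ ρ) (hr : 0 < r)
    (hcone : convexHull ℝ ({x} ∪ ball z (2 * r)) ⊆ S) (hy : y ∈ S)
    (hn : n ∈ proxNormalCone S y) (hn1 : ‖n‖ = 1) (hθ : θ ∈ Icc (0 : ℝ) 1) :
    θ * (inner ℝ n (z - x) + r) ≤
      ‖x - y‖ + (‖x - y‖ + θ * (‖z - x‖ + r)) ^ 2 / (2 * ρ) := by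
  have hp : z + r • n ∈ ball z (2 * r) := by
    rw [mem_ball, dist_eq_norm, add_sub_cancel_left, norm_smul, hn1, Real.norm_of_nonneg hr.le]
    linarith
  set w : H := x + θ • (z + r • n - x)
  have hw : w ∈ S := hcone <| (convex_convexHull ℝ _).add_smul_sub_mem
    (subset_convexHull ℝ _ (mem_union_left _ (mem_singleton x)))
    (subset_convexHull ℝ _ (mem_union_right _ hp)) hθ
  have hwy : w - y = (x - y) + θ • (z - x) + (θ * r) • n := by module
  have hinner : inner ℝ n (w - y) = inner ℝ n (x - y) + θ * inner ℝ n (z - x) + θ * r := by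
    rw [hwy, inner_add_right, inner_add_right, real_inner_smul_right, real_inner_smul_right,
      real_inner_self_eq_norm_sq, hn1, one_pow, mul_one]
  have hxy : -‖x - y‖ ≤ inner ℝ n (x - y) := by
    simpa [hn1] using neg_le_of_abs_le (abs_real_inner_le_norm n (x - y))
  have hnorm : ‖w - y‖ ≤ ‖x - y‖ + θ * (‖z - x‖ + r) := by
    rw [hwy]
    refine (norm_add₃_le ..).trans_eq ?_
    rw [norm_smul, norm_smul, hn1, Real.norm_of_nonneg hθ.1,
      Real.norm_of_nonneg (mul_nonneg hθ.1 hr.le)]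
    ring
  have hsq : ‖w - y‖ ^ 2 / (2 * ρ) ≤ (‖x - y‖ + θ * (‖z - x‖ + r)) ^ 2 / (2 * ρ) := by
    gcongr
  linarith [hS.inner_le_of_norm_eq_one hy hn hn1 hw]

lemma le_neg_half_of_mul_add_le {ρ r θ M a D K : ℝ} (hρ : 0 < ρ) (hr : 0 < r) (hθ : 0 < θ)
    (hθM : θ ≤ ρ * r / (8 * M ^ 2)) (ha0 : 0 ≤ a) (ha : a ≤ θ * r / 4) (hD : 0 ≤ D)
    (hDM : D + r ≤ M) (h : θ * (K + r) ≤ a + (a + θ * (D + r)) ^ 2 / (2 * ρ)) :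
    K ≤ -(r / 2) := by
  have hM : 0 < M := by linarith
  have hsum : a + θ * (D + r) ≤ 2 * θ * M := by nlinarith
  have hθM' : θ * (8 * M ^ 2) ≤ ρ * r := (le_div_iff₀ (by positivity)).1 hθM
  have hquad : (a + θ * (D + r)) ^ 2 / (2 * ρ) ≤ θ * r / 4 := by
    rw [div_le_iff₀ (by positivity)]
    calc (a + θ * (D + r)) ^ 2 ≤ (2 * θ * M) ^ 2 := by gcongr
      _ = θ * (θ * (8 * M ^ 2)) / 2 := by ring
      _ ≤ θ * (ρ * r) / 2 := by gcongr
      _ = θ * r / 4 * (2 * ρ) := by ring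
  nlinarith

/-- `θ ≤ 1` keeps the test point in the cone, and with `M = (L + 1) r` the bound
`θ ≤ ρ r / (8 M²)` makes the quadratic term of `mul_inner_add_le` at most `θ r / 4`. -/
noncomputable def proxConeStep (ρ r L : ℝ) : ℝ :=
  min 1 (ρ * r / (8 * ((L + 1) * r) ^ 2))

lemma proxConeStep_pos {ρ r L : ℝ} (hρ : 0 < ρ) (hr : 0 < r) (hL : 0 < L) :
    0 < proxConeStep ρ r L :=
  lt_min one_pos (by positivity)

lemma UniformProxRegular.inner_le_neg_half {ρ r L : ℝ} {S : Set H} {x y z n : H}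
    (hS : UniformProxRegular ρ S) (hρ : 0 < ρ) (hr : 0 < r) (hL : 0 < L)
    (hcone : convexHull ℝ ({x} ∪ ball z (2 * r)) ⊆ S) (hzx : ‖z - x‖ ≤ L * r)
    (hy : y ∈ S) (hyx : ‖y - x‖ < proxConeStep ρ r L * r / 4)
    (hn : n ∈ proxNormalCone S y) (hn1 : ‖n‖ = 1) :
    inner ℝ n (z - x) ≤ -(r / 2) := by
  have hθ : 0 < proxConeStep ρ r L := proxConeStep_pos hρ hr hL
  have hxy : ‖x - y‖ ≤ proxConeStep ρ r L * r / 4 := by rw [norm_sub_rev]; exact hyx.le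
  exact le_neg_half_of_mul_add_le (M := (L + 1) * r) hρ hr hθ (min_le_right _ _)
    (norm_nonneg _) hxy (norm_nonneg _) (by linarith)
    (hS.mul_inner_add_le hρ.le hr hcone hy hn hn1 ⟨hθ.le, min_le_left _ _⟩)

lemma UniformProxRegular.exists_unit_inner_le {ρ r L : ℝ} {S : Set H} {x z : H}
    (hS : UniformProxRegular ρ S) (hρ : 0 < ρ) (hr : 0 < r) (hL : 0 < L)
    (hx : x ∈ frontier S) (hcone : convexHull ℝ ({x} ∪ ball z (2 * r)) ⊆ S)
    (hzx : ‖z - x‖ ≤ L * r) :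
    ∃ ℓ : H, ‖ℓ‖ = 1 ∧ ∀ y ∈ S, ‖y - x‖ < proxConeStep ρ r L * r / 4 →
      ∀ n ∈ proxNormalCone S y, ‖n‖ = 1 → inner ℝ ℓ n ≤ -(1 / (2 * L)) := by
  have hball : ball z (2 * r) ⊆ S := subset_union_right.trans (subset_convexHull ℝ _) |>.trans hcone
  have hd : 2 * r ≤ ‖z - x‖ := by
    rw [← dist_eq_norm, dist_comm]
    exact le_dist_of_ball_subset_of_mem_frontier hball hx
  have hd0 : 0 < ‖z - x‖ := by linarith
  refine ⟨‖z - x‖⁻¹ • (z - x), by rw [norm_smul, norm_inv, norm_norm, inv_mul_cancel₀ hd0.ne'],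
    fun y hy hyx n hn hn1 => ?_⟩
  have hK := hS.inner_le_neg_half hρ hr hL hcone hzx hy hyx hn hn1
  rw [real_inner_smul_left, real_inner_comm, inv_mul_le_iff₀ hd0]
  calc inner ℝ n (z - x) ≤ -(r / 2) := hK
    _ = -(1 / (2 * L)) * (L * r) := by field_simp
    _ ≤ -(1 / (2 * L)) * ‖z - x‖ :=
      mul_le_mul_of_nonpos_left hzx (neg_nonpos.2 (by positivity))
    _ = ‖z - x‖ * -(1 / (2 * L)) := mul_comm _ _

end

theorem stmt11_general {H : Type*} [NormedAddCommGroup H] [InnerProductSpace ℝ H]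
    (T : ℝ) (C : ℝ → Set H)
    (ρ : ℝ) (hρ : 0 < ρ)
    (hH1 : ∀ t ∈ Icc (0:ℝ) T, (C t).Nonempty ∧ IsClosed (C t) ∧ UniformProxRegular ρ (C t))
    (hH4 : ∃ r > 0, ∃ L > 0, CondH4 T C r L) :
    ∃ δ > 0, ∃ L > 0, CondH5 T C δ L := by
  obtain ⟨r, hr, L, hL, hcone⟩ := hH4
  refine ⟨proxConeStep ρ r L * r / 4, by have := proxConeStep_pos hρ hr hL; positivity,
    2 * L, by positivity, fun t ht x hx => ?_⟩
  obtain ⟨z, hzC, hzx⟩ := hcone t ht x hx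
  exact (hH1 t ht).2.2.exists_unit_inner_le hρ hr hL hx hzC hzx

theorem stmt11 {H : Type*} [NormedAddCommGroup H] [InnerProductSpace ℝ H]
    [FiniteDimensional ℝ H]
    (T : ℝ) (hT : 0 < T) (C : ℝ → Set H)
    (ρ : ℝ) (hρ : 0 < ρ)
    (hH1 : ∀ t ∈ Icc (0:ℝ) T, (C t).Nonempty ∧ IsClosed (C t) ∧ UniformProxRegular ρ (C t))
    (hH2 : HausdorffCts T C)
    (hH3 : ∀ t ∈ Icc (0:ℝ) T, IsCompact (frontier (C t)))
    (hH4 : ∃ r > 0, ∃ L > 0, CondH4 T C r L) :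
    ∃ δ > 0, ∃ L > 0, CondH5 T C δ L :=
  stmt11_general T C ρ hρ hH1 hH4
end

section
/- In the sublevel-set setting, assume (a), (b) and (c). Then the set-valued map C(t) = ∩_{i=1}^m {x ∈ H : g_i(t,x) ≤ 0} is Hausdorff-continuous on [0,T]. -/
/-!
By compactness of `𝒬_ε` and continuity of the data, the positive linear independence of the
active gradients yields uniform constants `σ, ρ > 0`: every `(s, x) ∈ 𝒬_ε` lies near some
`c ∈ 𝒬_ε` with a unit vector `v` (Gordan's alternative) such that on the `ρ`-ball around `(s, x)`
each constraint `ε`-active at `c` decreases along `v` at rate at least `σ`, and every other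
constraint is satisfied. Now let `x ∈ C(s)` with `|s - t|` small. If `x ∉ C(t)`, then
`(s, x) ∈ 𝒬_ε`, and equicontinuity gives `g_i(t, x) ≤ σ a` for all `i`, so the point `x + a v`,
at distance `a` from `x`, lies in `C(t)`. The step `a` can be taken arbitrarily small.
-/

open Set Metric
open scoped Pointwise ENNReal

/-- The moving set given as a finite intersection of sublevel sets. -/
def Csub {E : Type*} {m : ℕ} (g : Fin m → ℝ → E → ℝ) (t : ℝ) : Set E :=
  {x | ∀ i, g i t x ≤ 0}

/-- The set of `ε`-active indices at `(t, x)`. -/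
def Iactive {E : Type*} {m : ℕ} (g : Fin m → ℝ → E → ℝ) (ε t : ℝ) (x : E) :
    Set (Fin m) :=
  {i | -ε ≤ g i t x ∧ g i t x ≤ 0}

open Filter Topology
open scoped RealInnerProductSpace

section General

variable {H : Type*} [NormedAddCommGroup H] [InnerProductSpace ℝ H] [CompleteSpace H]

def PositivelyIndependentOn {ι E : Type*} [Fintype ι] [AddCommMonoid E] [Module ℝ E]
    (w : ι → E) (S : Set ι) : Prop :=
  ∀ α : ι → ℝ, (∀ i, 0 ≤ α i) → (∀ i ∉ S, α i = 0) → ∑ i, α i • w i = 0 → ∀ i, α i = 0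

/-- Gordan's alternative: separate `0` from the convex hull of the `w i`, `i ∈ S`, which is the
image of the face of the standard simplex supported on `S`. -/
theorem PositivelyIndependentOn.exists_norm_eq_one_inner_neg {ι : Type*} [Fintype ι]
    {w : ι → H} {S : Set ι} (hw : PositivelyIndependentOn w S) (hS : S.Nonempty) :
    ∃ v : H, ‖v‖ = 1 ∧ ∀ i ∈ S, ⟪w i, v⟫ < 0 := by
  classical
  set L := Fintype.linearCombination ℝ w
  set Δ : Set (ι → ℝ) := stdSimplex ℝ ι ∩ Sᶜ.pi fun _ => {0}
  have hΔ : IsCompact Δ :=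
    (isCompact_stdSimplex ℝ ι).inter_right (isClosed_set_pi fun _ _ => isClosed_singleton)
  have hK : IsCompact (L '' Δ) := hΔ.image (LinearMap.continuous_of_finiteDimensional L)
  have hKconv : Convex ℝ (L '' Δ) :=
    ((convex_stdSimplex ℝ ι).inter (convex_pi fun _ _ => convex_singleton 0)).linear_image L
  have h0 : (0 : H) ∉ L '' Δ := by
    rintro ⟨α, ⟨hαΔ, hαS⟩, hα0⟩
    have hα : ∀ i, α i = 0 :=
      hw α hαΔ.1 (fun i hi => hαS i hi) (by rwa [Fintype.linearCombination_apply] at hα0)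
    simpa [hα] using hαΔ.2
  have hwK : ∀ i ∈ S, w i ∈ L '' Δ := fun i hi =>
    ⟨Pi.single i 1, ⟨single_mem_stdSimplex ℝ i, fun j hj => Pi.single_eq_of_ne (by grind) _⟩,
      by simp [L, Fintype.linearCombination_apply_single]⟩
  obtain ⟨f, u, hf0, hfK⟩ := geometric_hahn_banach_point_closed hKconv hK.isClosed h0
  set v := -(InnerProductSpace.toDual ℝ H).symm f
  have hv : ∀ i ∈ S, ⟪w i, v⟫ < 0 := fun i hi => by
    rw [inner_neg_right, real_inner_comm, InnerProductSpace.toDual_symm_apply, neg_neg_iff_pos]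
    linarith [hfK _ (hwK i hi), map_zero f]
  obtain ⟨i, hi⟩ := hS
  have hv0 : v ≠ 0 := fun h => by simpa [h] using hv i hi
  refine ⟨‖v‖⁻¹ • v, norm_smul_inv_norm hv0, fun j hj => ?_⟩
  rw [real_inner_smul_right]
  exact mul_neg_of_pos_of_neg (by positivity) (hv j hj)

theorem le_sub_mul_of_inner_gradient_le {f : H → ℝ} {x v : H} {a σ : ℝ} (ha : 0 ≤ a)
    (hf : ∀ τ ∈ Icc 0 a, DifferentiableAt ℝ f (x + τ • v))
    (hσ : ∀ τ ∈ Icc 0 a, ⟪gradient f (x + τ • v), v⟫ ≤ -σ) :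
    f (x + a • v) ≤ f x - σ * a := by
  have hderiv : ∀ τ ∈ Icc 0 a,
      HasDerivAt (fun τ : ℝ => f (x + τ • v)) ⟪gradient f (x + τ • v), v⟫ τ := fun τ hτ => by
    have hline : HasDerivAt (fun τ : ℝ => x + τ • v) v τ := by
      simpa using ((hasDerivAt_id τ).smul_const v).const_add x
    have h := (hf τ hτ).hasGradientAt.hasFDerivAt.comp_hasDerivAt τ hline
    rwa [InnerProductSpace.toDual_apply_apply] at h
  have hmvt := (convex_Icc 0 a).image_sub_le_mul_sub_of_deriv_le
    (fun τ hτ => (hderiv τ hτ).continuousAt.continuousWithinAt)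
    (fun τ hτ => (hderiv τ (interior_subset hτ)).differentiableAt.differentiableWithinAt)
    (fun τ hτ => (hderiv τ (interior_subset hτ)).deriv.trans_le (hσ τ (interior_subset hτ)))
    0 (left_mem_Icc.2 ha) a (right_mem_Icc.2 ha) ha
  simp only [zero_smul, add_zero, sub_zero] at hmvt
  linarith

end General

theorem IsCompact.exists_uniform_of_forall_eventually {X : Type*} [PseudoMetricSpace X]
    {K : Set X} (hK : IsCompact K) {P : X → ℝ → X → Prop}
    (hP_anti : ∀ c q, Antitone fun σ => P c σ q)
    (hP : ∀ c ∈ K, ∃ σ > 0, ∀ᶠ q in 𝓝 c, P c σ q) :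
    ∃ σ > 0, ∃ ρ > 0, ∀ p ∈ K, ∃ c ∈ K, ∀ q ∈ ball p ρ, P c σ q := by
  choose! σ hσ hPσ using hP
  set U : X → Set X := fun c => interior {q | P c (σ c) q}
  obtain ⟨t, htK, hcover⟩ :=
    hK.elim_nhds_subcover U fun c hc => interior_mem_nhds.2 (hPσ c hc)
  obtain ⟨ρ, hρ, hleb⟩ := lebesgue_number_lemma_of_metric (c := fun c : t => U c) hK
    (fun _ => isOpen_interior) fun p hp => by
      obtain ⟨c, hc, hpc⟩ := mem_iUnion₂.1 (hcover hp)
      exact mem_iUnion.2 ⟨⟨c, hc⟩, hpc⟩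
  obtain ⟨σ₀, hσ₀t, hσ₀⟩ : ∃ σ₀, (∀ c ∈ t, σ₀ ∈ Ioc 0 (σ c)) ∧ σ₀ ∈ Ioi 0 :=
    (((eventually_all_finset t).2 fun c hc => Ioc_mem_nhdsGT (hσ c (htK c hc))).and
      self_mem_nhdsWithin).exists
  refine ⟨σ₀, hσ₀, ρ, hρ, fun p hp => ?_⟩
  obtain ⟨⟨c, hc⟩, hball⟩ := hleb p hp
  exact ⟨c, htK c hc, fun q hq =>
    hP_anti c q (hσ₀t c hc).2 (interior_subset (hball hq))⟩

theorem hausdorffCts_of_forall_exists_dist_le {E : Type*} [NormedAddCommGroup E] {T : ℝ}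
    {C : ℝ → Set E}
    (h : ∀ r > 0, ∃ δ > 0, ∀ s ∈ Icc (0:ℝ) T, ∀ t ∈ Icc (0:ℝ) T, |s - t| < δ →
      ∀ x ∈ C s, ∃ y ∈ C t, dist x y ≤ r) :
    HausdorffCts T C := by
  intro ε hε
  obtain ⟨δ, hδ, hnear⟩ := h (ε / 2) (half_pos hε)
  refine ⟨δ, hδ, fun s hs t ht hst => ?_⟩
  have hedist : ∀ {s t}, s ∈ Icc (0:ℝ) T → t ∈ Icc (0:ℝ) T → |s - t| < δ →
      ∀ x ∈ C s, ∃ y ∈ C t, edist x y ≤ ENNReal.ofReal (ε / 2) := fun hs ht hst x hx => by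
    obtain ⟨y, hy, hxy⟩ := hnear _ hs _ ht hst x hx
    exact ⟨y, hy, edist_dist x y ▸ ENNReal.ofReal_le_ofReal hxy⟩
  exact (hausdorffEDist_le_of_mem_edist (hedist hs ht hst)
    (hedist ht hs (by rwa [abs_sub_comm]))).trans_lt
    ((ENNReal.ofReal_lt_ofReal_iff hε).2 (half_lt_self hε))

section Sublevel

variable {H : Type*} {m : ℕ} {g : Fin m → ℝ → H → ℝ} {T ε : ℝ}

/-- The set `𝒬_ε` of assumption (a). -/
def activeGraph (g : Fin m → ℝ → H → ℝ) (T ε : ℝ) : Set (ℝ × H) :=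
  {p | p.1 ∈ Icc (0:ℝ) T ∧ p.2 ∈ Csub g p.1 ∧ (Iactive g ε p.1 p.2).Nonempty}

theorem isClosed_activeGraph [TopologicalSpace H]
    (hg : ∀ i, ContinuousOn (fun p : ℝ × H => g i p.1 p.2) (Icc (0:ℝ) T ×ˢ univ)) :
    IsClosed (activeGraph g T ε) := by
  set G : ℝ × H → (Fin m → ℝ) := fun p i => g i p.1 p.2
  set B : Set (Fin m → ℝ) := (⋂ i, {y | y i ≤ 0}) ∩ ⋃ i, {y | -ε ≤ y i}
  have hB : IsClosed B :=
    (isClosed_iInter fun i => isClosed_le (continuous_apply i) continuous_const).inter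
      (isClosed_iUnion_of_finite fun i => isClosed_le continuous_const (continuous_apply i))
  have hQ : activeGraph g T ε = (Icc (0:ℝ) T ×ˢ univ) ∩ G ⁻¹' B := by
    ext p
    simp only [activeGraph, Csub, Iactive, Set.Nonempty, B, G, mem_ofPred_eq, mem_inter_iff,
      mem_prod, mem_univ, and_true, mem_preimage, mem_iInter, mem_iUnion]
    grind
  rw [hQ]
  exact (continuousOn_pi.2 hg).preimage_isClosed_of_isClosed
    (isClosed_Icc.prod isClosed_univ) hB

variable [NormedAddCommGroup H] [InnerProductSpace ℝ H] [CompleteSpace H]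

def DescentCondition (g : Fin m → ℝ → H → ℝ) (T ε σ : ℝ) (c : ℝ × H) (v : H) (q : ℝ × H) :
    Prop :=
  q.1 ∈ Icc (0:ℝ) T → ∀ i,
    (i ∈ Iactive g ε c.1 c.2 → ⟪gradient (g i q.1) q.2, v⟫ ≤ -σ) ∧
    (i ∉ Iactive g ε c.1 c.2 → g i q.1 q.2 ≤ 0)

theorem DescentCondition.anti {c : ℝ × H} {v : H} {q : ℝ × H} :
    Antitone fun σ => DescentCondition g T ε σ c v q :=
  fun _ _ hσ h hq i => ⟨fun hi => ((h hq i).1 hi).trans (neg_le_neg hσ), (h hq i).2⟩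

theorem eventually_descentCondition
    (hg : ∀ i, ContinuousOn (fun p : ℝ × H => g i p.1 p.2) (Icc (0:ℝ) T ×ˢ univ))
    (hgrad : ∀ i, ContinuousOn (fun p : ℝ × H => gradient (g i p.1) p.2) (Icc (0:ℝ) T ×ˢ univ))
    (hε : 0 ≤ ε) {c : ℝ × H} (hc : c ∈ activeGraph g T ε) {v : H}
    (hv : ∀ i ∈ Iactive g ε c.1 c.2, ⟪gradient (g i c.1) c.2, v⟫ < 0) :
    ∃ σ > 0, ∀ᶠ q in 𝓝 c, DescentCondition g T ε σ c v q := by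
  have hcA : c ∈ Icc (0:ℝ) T ×ˢ (univ : Set H) := ⟨hc.1, mem_univ _⟩
  obtain ⟨σ, hσ, hσ0⟩ : ∃ σ, (∀ i ∈ Iactive g ε c.1 c.2, σ < -⟪gradient (g i c.1) c.2, v⟫) ∧
      σ ∈ Ioi 0 :=
    ((eventually_all.2 fun i => eventually_imp_distrib_left.2 fun hi =>
      eventually_of_mem (Ioo_mem_nhdsGT (neg_pos.2 (hv i hi))) fun _ h => h.2).and
      (self_mem_nhdsWithin : Ioi (0:ℝ) ∈ 𝓝[>] 0)).exists
  refine ⟨σ, hσ0, ?_⟩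
  have hwithin : ∀ᶠ q in 𝓝[Icc (0:ℝ) T ×ˢ univ] c, ∀ i,
      (i ∈ Iactive g ε c.1 c.2 → ⟪gradient (g i q.1) q.2, v⟫ ≤ -σ) ∧
      (i ∉ Iactive g ε c.1 c.2 → g i q.1 q.2 ≤ 0) := by
    refine eventually_all.2 fun i => Eventually.and ?_ ?_
    · refine eventually_imp_distrib_left.2 fun hi => ?_
      have hlt : ⟪gradient (g i c.1) c.2, v⟫ < -σ := by linarith [hσ i hi]
      exact ((((hgrad i).inner continuousOn_const) c hcA).eventually_lt_const hlt).mono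
        fun _ h => h.le
    · refine eventually_imp_distrib_left.2 fun hi => ?_
      have hneg : g i c.1 c.2 < 0 := by
        have hle := hc.2.1 i
        have : g i c.1 c.2 < -ε := not_le.1 fun h => hi ⟨h, hle⟩
        linarith
      exact (((hg i) c hcA).eventually_lt_const hneg).mono fun _ h => h.le
  exact (eventually_nhdsWithin_iff.1 hwithin).mono fun q hq hq1 => hq ⟨hq1, mem_univ _⟩

theorem add_smul_mem_Csub {s t a σ ρ : ℝ} {c : ℝ × H} {x v : H}
    (hdiff : ∀ i y, DifferentiableAt ℝ (g i t) y) (ht : t ∈ Icc (0:ℝ) T) (hst : |s - t| < ρ)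
    (ha : 0 ≤ a) (haρ : a < ρ) (hv : ‖v‖ = 1)
    (hdesc : ∀ q ∈ ball (s, x) ρ, DescentCondition g T ε σ c v q)
    (hx : ∀ i, g i t x ≤ σ * a) :
    x + a • v ∈ Csub g t := by
  have hball : ∀ τ ∈ Icc 0 a, (t, x + τ • v) ∈ ball (s, x) ρ := fun τ hτ => by
    rw [mem_ball, Prod.dist_eq, dist_self_add_left, norm_smul, hv, mul_one,
      Real.norm_of_nonneg hτ.1, Real.dist_eq, abs_sub_comm]
    exact max_lt hst (hτ.2.trans_lt haρ)
  intro i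
  by_cases hi : i ∈ Iactive g ε c.1 c.2
  · have := le_sub_mul_of_inner_gradient_le ha (fun τ _ => hdiff i _)
      fun τ hτ => (hdesc _ (hball τ hτ) ht i).1 hi
    linarith [hx i]
  · exact (hdesc _ (hball a (right_mem_Icc.2 ha)) ht i).2 hi

end Sublevel

theorem stmt13_general (d m : ℕ) (T : ℝ)
    (g : Fin m → ℝ → EuclideanSpace ℝ (Fin d) → ℝ)
    (hdiff : ∀ i, ∀ t ∈ Icc (0:ℝ) T, ∀ x, DifferentiableAt ℝ (g i t) x)
    -- assumption (a)
    (ε : ℝ) (hε : 0 < ε)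
    (hQbdd : Bornology.IsBounded {p : ℝ × EuclideanSpace ℝ (Fin d) |
      p.1 ∈ Icc (0:ℝ) T ∧ p.2 ∈ Csub g p.1 ∧ (Iactive g ε p.1 p.2).Nonempty})
    (hPLI : ∀ t ∈ Icc (0:ℝ) T, ∀ x ∈ Csub g t, (Iactive g ε t x).Nonempty →
      ∀ α : Fin m → ℝ, (∀ i, 0 ≤ α i) → (∀ i, i ∉ Iactive g ε t x → α i = 0) →
        ∑ i, α i • gradient (g i t) x = 0 → ∀ i, α i = 0)
    -- assumption (b)
    (hg_cont : ∀ i, ContinuousOn (fun p : ℝ × EuclideanSpace ℝ (Fin d) => g i p.1 p.2)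
      (Icc (0:ℝ) T ×ˢ univ))
    (hgrad_cont : ∀ i, ContinuousOn
      (fun p : ℝ × EuclideanSpace ℝ (Fin d) => gradient (g i p.1) p.2)
      (Icc (0:ℝ) T ×ˢ univ))
    (hequi : ∀ ε' > 0, ∃ δ > 0, ∀ i, ∀ x : EuclideanSpace ℝ (Fin d),
      ∀ s ∈ Icc (0:ℝ) T, ∀ t ∈ Icc (0:ℝ) T, |s - t| < δ → |g i s x - g i t x| < ε') :
    HausdorffCts T (Csub g) := by
  have hQ : IsCompact (activeGraph g T ε) :=
    isCompact_of_isClosed_isBounded (isClosed_activeGraph hg_cont) hQbdd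
  have hdir : ∀ c ∈ activeGraph g T ε, ∃ v, ‖v‖ = 1 ∧
      ∀ i ∈ Iactive g ε c.1 c.2, ⟪gradient (g i c.1) c.2, v⟫ < 0 := fun c hc =>
    PositivelyIndependentOn.exists_norm_eq_one_inner_neg (hPLI c.1 hc.1 c.2 hc.2.1 hc.2.2) hc.2.2
  choose! v hv_norm hv using hdir
  obtain ⟨σ, hσ, ρ, hρ, hunif⟩ :=
    hQ.exists_uniform_of_forall_eventually (fun c q => DescentCondition.anti (v := v c))
      fun c hc => eventually_descentCondition hg_cont hgrad_cont hε.le hc (hv c hc)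
  refine hausdorffCts_of_forall_exists_dist_le fun r hr => ?_
  set a := min r (ρ / 2)
  have ha : 0 < a := lt_min hr (half_pos hρ)
  obtain ⟨δ, hδ, hequiδ⟩ := hequi (min (σ * a) ε) (lt_min (mul_pos hσ ha) hε)
  refine ⟨min δ ρ, lt_min hδ hρ, fun s hs t ht hst x hx => ?_⟩
  by_cases hxt : x ∈ Csub g t
  · exact ⟨x, hxt, by simpa using hr.le⟩
  have hclose : ∀ i, g i t x < g i s x + min (σ * a) ε := fun i => by
    linarith [abs_lt.1 (hequiδ i x s hs t ht (hst.trans_le (min_le_left _ _)))]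
  obtain ⟨i₀, hi₀⟩ : ∃ i, 0 < g i t x := by simpa [Csub] using hxt
  -- the constraint `i₀` violated at time `t` is `ε`-active at `(s, x)`
  obtain ⟨c, hcQ, hc⟩ := hunif (s, x)
    ⟨hs, hx, i₀, by linarith [hclose i₀, min_le_right (σ * a) ε], hx i₀⟩
  refine ⟨x + a • v c, add_smul_mem_Csub (fun i => hdiff i t ht) ht
    (hst.trans_le (min_le_right _ _)) ha.le ((min_le_right _ _).trans_lt (half_lt_self hρ))
    (hv_norm c hcQ) hc fun i => by linarith [hclose i, hx i, min_le_left (σ * a) ε], ?_⟩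
  rw [dist_self_add_right, norm_smul, hv_norm c hcQ, mul_one, Real.norm_of_nonneg ha.le]
  exact min_le_left _ _

theorem stmt13 (d m : ℕ) (T : ℝ) (hT : 0 < T)
    (g : Fin m → ℝ → EuclideanSpace ℝ (Fin d) → ℝ)
    (hdiff : ∀ i, ∀ t ∈ Icc (0:ℝ) T, ∀ x, DifferentiableAt ℝ (g i t) x)
    -- assumption (a)
    (ε : ℝ) (hε : 0 < ε)
    (hQbdd : Bornology.IsBounded {p : ℝ × EuclideanSpace ℝ (Fin d) |
      p.1 ∈ Icc (0:ℝ) T ∧ p.2 ∈ Csub g p.1 ∧ (Iactive g ε p.1 p.2).Nonempty})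
    (hPLI : ∀ t ∈ Icc (0:ℝ) T, ∀ x ∈ Csub g t, (Iactive g ε t x).Nonempty →
      ∀ α : Fin m → ℝ, (∀ i, 0 ≤ α i) → (∀ i, i ∉ Iactive g ε t x → α i = 0) →
        ∑ i, α i • gradient (g i t) x = 0 → ∀ i, α i = 0)
    -- assumption (b)
    (hg_cont : ∀ i, ContinuousOn (fun p : ℝ × EuclideanSpace ℝ (Fin d) => g i p.1 p.2)
      (Icc (0:ℝ) T ×ˢ univ))
    (hgrad_cont : ∀ i, ContinuousOn
      (fun p : ℝ × EuclideanSpace ℝ (Fin d) => gradient (g i p.1) p.2)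
      (Icc (0:ℝ) T ×ˢ univ))
    (hequi : ∀ ε' > 0, ∃ δ > 0, ∀ i, ∀ x : EuclideanSpace ℝ (Fin d),
      ∀ s ∈ Icc (0:ℝ) T, ∀ t ∈ Icc (0:ℝ) T, |s - t| < δ → |g i s x - g i t x| < ε')
    -- assumption (c)
    (hLip : ∃ L > 0, ∃ η > 0, ∀ t ∈ Icc (0:ℝ) T, ∀ i,
      ∀ x ∈ Csub g t + closedBall (0 : EuclideanSpace ℝ (Fin d)) η,
      ∀ y ∈ Csub g t + closedBall (0 : EuclideanSpace ℝ (Fin d)) η,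
        ‖gradient (g i t) x - gradient (g i t) y‖ ≤ L * ‖x - y‖) :
    HausdorffCts T (Csub g) :=
  stmt13_general d m T g hdiff ε hε hQbdd hPLI hg_cont hgrad_cont hequi
end

section
/- In the sublevel-set setting, assume (a), (b) and (c), and assume additionally that C(t) ≠ ∅ for every t ∈ [0,T]. Then there exists ρ > 0 such that for every t ∈ [0,T] the set C(t) = ∩_{i=1}^m {x ∈ H : g_i(t,x) ≤ 0} is ρ-uniformly prox-regular. -/
open Set Metric
open scoped Pointwise

/-!
Positive linear independence of the active gradients yields a Mangasarian–Fromovitz direction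
(Gordan's alternative), so every direction that does not increase the active constraints to first
order is a limit of feasible directions. A proximal normal `ζ` to `C(t)` at `x` has nonpositive
inner product with all of them, so it lies in the closed cone generated by the active gradients
(Farkas). Compactness of the set of `(t, x, weights)` supported on ε-active indices gives
a uniform `c > 0` with `c ∑ αᵢ ≤ ‖∑ αᵢ ∇gᵢ(t, x)‖`, so `ζ` is a limit of combinations with total
weight at most `‖ζ‖ / c`. The Lipschitz gradient gives `⟪∇gᵢ(t, x), x' - x⟫ ≤ L ‖x' - x‖²` for
active `i` and `x' ∈ C(t)` within `2η`, whence `⟪ζ, x' - x⟫ ≤ (L / c) ‖ζ‖ ‖x' - x‖²`; farther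
points are handled by Cauchy–Schwarz. Thus `ρ = min (c / (2L)) η` works.
-/

open Filter Topology
open scoped RealInnerProductSpace

section

variable {H : Type*} [NormedAddCommGroup H] [InnerProductSpace ℝ H] {ι : Type*} [Fintype ι]

def PosLinearIndepOn (v : ι → H) (s : Set ι) : Prop :=
  ∀ β : ι → ℝ, (∀ i, 0 ≤ β i) → (∀ i ∉ s, β i = 0) → ∑ i, β i • v i = 0 → ∀ i, β i = 0

theorem PosLinearIndepOn.mono {v : ι → H} {s t : Set ι} (h : PosLinearIndepOn v s) (hts : t ⊆ s) :
    PosLinearIndepOn v t :=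
  fun β hβ0 hβt hβ => h β hβ0 (fun i hi => hβt i fun hit => hi (hts hit)) hβ

theorem PosLinearIndepOn.of_mul_sum_le_norm {v : ι → H} {s : Set ι} {c : ℝ} (hc : 0 < c)
    (h : ∀ β : ι → ℝ, (∀ i, 0 ≤ β i) → (∀ i ∉ s, β i = 0) →
      c * ∑ i, β i ≤ ‖∑ i, β i • v i‖) : PosLinearIndepOn v s := by
  intro β hβ0 hβs hβ
  have hsum : ∑ i, β i = 0 := by
    have := h β hβ0 hβs
    rw [hβ, norm_zero] at this
    linarith [Finset.sum_nonneg fun i (_ : i ∈ Finset.univ) => hβ0 i,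
      (mul_nonpos_iff_pos_imp_nonpos.1 this).1 hc]
  exact fun i => (Finset.sum_eq_zero_iff_of_nonneg fun i _ => hβ0 i).1 hsum i (Finset.mem_univ i)

theorem mul_sum_le_norm_sum_smul {v : ι → H} {s : Set ι} {c : ℝ}
    (h : ∀ β ∈ stdSimplex ℝ ι, (∀ i ∉ s, β i = 0) → c ≤ ‖∑ i, β i • v i‖)
    {β : ι → ℝ} (hβ0 : ∀ i, 0 ≤ β i) (hβs : ∀ i ∉ s, β i = 0) :
    c * ∑ i, β i ≤ ‖∑ i, β i • v i‖ := by
  rcases (Finset.sum_nonneg fun i (_ : i ∈ Finset.univ) => hβ0 i).eq_or_lt with hσ | hσ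
  · rw [← hσ, mul_zero]
    exact norm_nonneg _
  · have hsimplex : (∑ i, β i)⁻¹ • β ∈ stdSimplex ℝ ι :=
      ⟨fun i => mul_nonneg (inv_nonneg.2 hσ.le) (hβ0 i), by
        simp [← Finset.mul_sum, inv_mul_cancel₀ hσ.ne']⟩
    have := h _ hsimplex fun i hi => by simp [hβs i hi]
    simp only [Pi.smul_apply, smul_eq_mul, ← smul_smul, ← Finset.smul_sum, norm_smul,
      Real.norm_of_nonneg (inv_nonneg.2 hσ.le)] at this
    rwa [← le_div_iff₀ hσ, div_eq_inv_mul]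

theorem exists_pos_mul_sum_le_norm_sum_smul_of_isCompact {P : Type*} [TopologicalSpace P]
    {Q : Set P} (hQ : IsCompact Q) {v : ι → P → H} (hv : ∀ i, ContinuousOn (v i) Q)
    {A : ι → Set P} (hA : ∀ i, IsClosed (A i))
    (hind : ∀ p ∈ Q, PosLinearIndepOn (fun i => v i p) {i | p ∈ A i}) :
    ∃ c > 0, ∀ p ∈ Q, ∀ β : ι → ℝ, (∀ i, 0 ≤ β i) → (∀ i, p ∉ A i → β i = 0) →
      c * ∑ i, β i ≤ ‖∑ i, β i • v i p‖ := by
  set S := (Q ×ˢ stdSimplex ℝ ι) ∩ {q | ∀ i, q.1 ∉ A i → q.2 i = 0}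
  have hS : IsCompact S := (hQ.prod (isCompact_stdSimplex ℝ ι)).inter_right <| by
    simp only [← or_iff_not_imp_left, ofPred_forall, ofPred_or]
    exact isClosed_iInter fun i => ((hA i).preimage continuous_fst).union
      (isClosed_eq ((continuous_apply i).comp continuous_snd) continuous_const)
  have hcont : ContinuousOn (fun q : P × (ι → ℝ) => ‖∑ i, q.2 i • v i q.1‖) S :=
    (continuousOn_finsetSum _ fun i _ =>
      ((continuous_apply i).comp continuous_snd).continuousOn.smul
        ((hv i).comp continuousOn_fst fun _ hq => hq.1.1)).norm
  have hpos : ∀ q ∈ S, 0 < ‖∑ i, q.2 i • v i q.1‖ := by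
    rintro ⟨p, β⟩ ⟨⟨hp, hβ0, hβ1⟩, hβA⟩
    refine norm_pos_iff.2 fun hzero => ?_
    simp [Finset.sum_eq_zero fun i _ => hind p hp β hβ0 hβA hzero i] at hβ1
  obtain ⟨c, hc, hcS⟩ := hS.exists_forall_le' hcont hpos
  refine ⟨c, hc, fun p hp β hβ0 hβA => ?_⟩
  exact mul_sum_le_norm_sum_smul (s := {i | p ∈ A i})
    (fun β' hβ' hβ'A => hcS (p, β') ⟨⟨hp, hβ'⟩, hβ'A⟩) hβ0 hβA

theorem exists_nonneg_coeffs_of_mem_hull {v : ι → H} {s : Set ι} {u : H}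
    (hu : u ∈ PointedCone.hull ℝ (v '' s)) :
    ∃ α : ι → ℝ, (∀ i, 0 ≤ α i) ∧ (∀ i ∉ s, α i = 0) ∧ ∑ i, α i • v i = u := by
  classical
  induction hu using Submodule.span_induction with
  | mem _ hx =>
    obtain ⟨i, hi, rfl⟩ := hx
    refine ⟨Pi.single i 1, fun j => ?_, fun j hj => ?_, by simp⟩
    · by_cases hji : j = i <;> simp [hji]
    · exact Pi.single_eq_of_ne (by rintro rfl; exact hj hi) _
  | zero => exact ⟨0, fun _ => le_rfl, fun _ _ => rfl, by simp⟩
  | add _ _ _ _ hx hy =>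
    obtain ⟨α, hα0, hαs, rfl⟩ := hx
    obtain ⟨α', hα'0, hα's, rfl⟩ := hy
    refine ⟨α + α', fun i => add_nonneg (hα0 i) (hα'0 i), fun i hi => by
      simp [hαs i hi, hα's i hi], by simp [add_smul, Finset.sum_add_distrib]⟩
  | smul c _ _ hx =>
    obtain ⟨α, hα0, hαs, rfl⟩ := hx
    refine ⟨(c : ℝ) • α, fun i => mul_nonneg c.2 (hα0 i), fun i hi => by simp [hαs i hi], ?_⟩
    simp [← Nonneg.coe_smul, Finset.smul_sum, smul_smul]

theorem inner_le_of_mem_closure_hull {v : ι → H} {s : Set ι} {h : H} {M c : ℝ} (hM : 0 ≤ M)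
    (hc : 0 < c) (hv : ∀ i ∈ s, ⟪v i, h⟫ ≤ M)
    (hbound : ∀ β : ι → ℝ, (∀ i, 0 ≤ β i) → (∀ i ∉ s, β i = 0) →
      c * ∑ i, β i ≤ ‖∑ i, β i • v i‖)
    {ζ : H} (hζ : ζ ∈ closure (PointedCone.hull ℝ (v '' s) : Set H)) :
    ⟪ζ, h⟫ ≤ M / c * ‖ζ‖ := by
  refine closure_minimal (fun u hu => ?_)
    (isClosed_le (f := fun u => ⟪u, h⟫) (g := fun u => M / c * ‖u‖) (by fun_prop) (by fun_prop)) hζ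
  obtain ⟨α, hα0, hαs, rfl⟩ := exists_nonneg_coeffs_of_mem_hull hu
  have hterm : ∀ i, α i * ⟪v i, h⟫ ≤ α i * M := fun i => by
    by_cases hi : i ∈ s
    · exact mul_le_mul_of_nonneg_left (hv i hi) (hα0 i)
    · simp [hαs i hi]
  calc ⟪∑ i, α i • v i, h⟫ = ∑ i, α i * ⟪v i, h⟫ := by simp [sum_inner, real_inner_smul_left]
    _ ≤ (∑ i, α i) * M := by rw [Finset.sum_mul]; exact Finset.sum_le_sum fun i _ => hterm i
    _ ≤ ‖∑ i, α i • v i‖ / c * M := by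
      gcongr
      rw [le_div_iff₀' hc]
      exact hbound α hα0 hαs
    _ = M / c * ‖∑ i, α i • v i‖ := by ring

theorem inner_nonpos_of_mem_proxNormalCone {S : Set H} {x ζ u : H}
    (hζ : ζ ∈ proxNormalCone S x) (hu : ∀ᶠ s in 𝓝[>] (0 : ℝ), x + s • u ∈ S) :
    ⟪ζ, u⟫ ≤ 0 := by
  obtain ⟨σ, -, hσ⟩ := hζ
  have hlim : Tendsto (fun s : ℝ => σ * s * ‖u‖ ^ 2) (𝓝[>] 0) (𝓝 0) := by
    have : Continuous fun s : ℝ => σ * s * ‖u‖ ^ 2 := by fun_prop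
    simpa using (this.tendsto 0).mono_left nhdsWithin_le_nhds
  refine ge_of_tendsto hlim ?_
  filter_upwards [hu, self_mem_nhdsWithin] with s hs (hs0 : 0 < s)
  have := hσ _ hs
  rw [add_sub_cancel_left, real_inner_smul_right, norm_smul, Real.norm_of_nonneg hs0.le] at this
  nlinarith

theorem real_inner_le_div_mul_sq_of_two_mul_le_norm (ζ : H) {h : H} {ρ : ℝ} (hρ : 0 < ρ)
    (hh : 2 * ρ ≤ ‖h‖) : ⟪ζ, h⟫ ≤ ‖ζ‖ / (2 * ρ) * ‖h‖ ^ 2 :=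
  calc ⟪ζ, h⟫ ≤ ‖ζ‖ * ‖h‖ := real_inner_le_norm ζ h
    _ = ‖ζ‖ / (2 * ρ) * (2 * ρ) * ‖h‖ := by field_simp
    _ ≤ ‖ζ‖ / (2 * ρ) * ‖h‖ * ‖h‖ := by gcongr
    _ = ‖ζ‖ / (2 * ρ) * ‖h‖ ^ 2 := by ring

theorem segment_subset_add_closedBall {E : Type*} [SeminormedAddCommGroup E] [NormedSpace ℝ E]
    {C : Set E} {x x' : E} (hx : x ∈ C) (hx' : x' ∈ C) {η : ℝ} (h : ‖x' - x‖ ≤ 2 * η) :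
    segment ℝ x x' ⊆ C + closedBall 0 η := by
  rw [segment_eq_image']
  rintro _ ⟨θ, ⟨hθ0, hθ1⟩, rfl⟩
  rcases le_total θ (1 / 2) with hθ | hθ
  · refine add_mem_add hx (mem_closedBall_zero_iff.2 ?_)
    rw [norm_smul, Real.norm_of_nonneg hθ0]
    nlinarith [norm_nonneg (x' - x)]
  · have : x + θ • (x' - x) = x' + (1 - θ) • (x - x') := by module
    change x + θ • (x' - x) ∈ _
    rw [this]
    refine add_mem_add hx' (mem_closedBall_zero_iff.2 ?_)
    rw [norm_smul, Real.norm_of_nonneg (by linarith), norm_sub_rev]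
    nlinarith [norm_nonneg (x' - x)]

variable [CompleteSpace H]

theorem PosLinearIndepOn.exists_inner_neg {v : ι → H} {s : Set ι}
    (h : PosLinearIndepOn v s) : ∃ w : H, ∀ i ∈ s, ⟪v i, w⟫ < 0 := by
  classical
  set Δ := stdSimplex ℝ ι ∩ {β | ∀ i ∉ s, β i = 0}
  have hΔ : IsCompact Δ := (isCompact_stdSimplex ℝ ι).inter_right <| by
    simp only [ofPred_forall]
    exact isClosed_iInter fun i => isClosed_iInter fun _ =>
      isClosed_eq (continuous_apply i) continuous_const
  have hΔconv : Convex ℝ Δ := (convex_stdSimplex ℝ ι).inter <| by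
    intro β hβ β' hβ' a b _ _ _ i hi
    simp [hβ i hi, hβ' i hi]
  set Φ := Fintype.linearCombination ℝ v
  have hD : IsCompact (Φ '' Δ) := hΔ.image (LinearMap.continuous_of_finiteDimensional Φ)
  have h0 : (0 : H) ∉ Φ '' Δ := by
    rintro ⟨β, ⟨⟨hβ0, hβ1⟩, hβs⟩, hβ⟩
    rw [Fintype.linearCombination_apply] at hβ
    simp [Finset.sum_eq_zero fun i _ => h β hβ0 hβs hβ i] at hβ1
  obtain ⟨f, u, hfu, hu0⟩ :=
    geometric_hahn_banach_closed_point (hΔconv.linear_image Φ) hD.isClosed h0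
  refine ⟨(InnerProductSpace.toDual ℝ H).symm f, fun i hi => ?_⟩
  have hvi : v i ∈ Φ '' Δ := ⟨Pi.single i 1, ⟨single_mem_stdSimplex ℝ i,
    fun j hj => Pi.single_eq_of_ne (by rintro rfl; exact hj hi) _⟩, by simp [Φ]⟩
  rw [real_inner_comm, InnerProductSpace.toDual_symm_apply]
  simpa using (hfu _ hvi).trans hu0

theorem PointedCone.mem_closure_of_forall_inner_nonneg {K : PointedCone ℝ H}
    {ζ : H} (h : ∀ y, (∀ u ∈ K, 0 ≤ ⟪u, y⟫) → 0 ≤ ⟪ζ, y⟫) : ζ ∈ closure (K : Set H) := by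
  by_contra hζ
  obtain ⟨y, hKy, hζy⟩ := ProperCone.hyperplane_separation' (Submodule.closure K) hζ
  exact hζy.not_ge (h y fun u hu => hKy u (subset_closure hu))

theorem inner_gradient_le_of_norm_gradient_sub_le {g : H → ℝ} {x x' : H} {M : ℝ}
    (hg : ∀ z ∈ segment ℝ x x', DifferentiableAt ℝ g z)
    (hM : ∀ z ∈ segment ℝ x x', ‖gradient g z - gradient g x‖ ≤ M) :
    ⟪gradient g x, x' - x⟫ ≤ g x' - g x + M * ‖x' - x‖ := by
  have hfderiv : ∀ z ∈ segment ℝ x x',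
      fderiv ℝ g z = InnerProductSpace.toDual ℝ H (gradient g z) := fun z hz =>
    (hg z hz).hasGradientAt.hasFDerivAt.fderiv
  have hx : x ∈ segment ℝ x x' := left_mem_segment ℝ x x'
  have key := (convex_segment x x').norm_image_sub_le_of_norm_fderiv_le' (φ := fderiv ℝ g x) hg
    (fun z hz => by
      rw [hfderiv z hz, hfderiv x hx, ← map_sub, LinearIsometryEquiv.norm_map]
      exact hM z hz)
    hx (right_mem_segment ℝ x x')
  rw [hfderiv x hx, InnerProductSpace.toDual_apply_apply] at key
  linarith [(abs_le.1 (Real.norm_eq_abs _ ▸ key)).1]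

section

variable {f : ι → H → ℝ} {x : H}

theorem eventually_sublevel_add_smul (hf : ∀ i, DifferentiableAt ℝ (f i) x)
    (hx : ∀ i, f i x ≤ 0) {w : H} (hw : ∀ i, f i x = 0 → ⟪gradient (f i) x, w⟫ < 0) :
    ∀ᶠ s in 𝓝[>] (0 : ℝ), ∀ i, f i (x + s • w) ≤ 0 := by
  refine eventually_all.2 fun i => ?_
  have hline : HasDerivAt (fun s : ℝ => x + s • w) w 0 := by
    simpa using ((hasDerivAt_id (0 : ℝ)).smul_const w).const_add x
  have hφ : HasDerivAt (fun s : ℝ => f i (x + s • w)) ⟪gradient (f i) x, w⟫ 0 := by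
    have := (hf i).hasGradientAt.hasFDerivAt.comp_hasDerivAt_of_eq 0 hline (by simp)
    rwa [InnerProductSpace.toDual_apply_apply] at this
  rcases (hx i).lt_or_eq with hneg | hzero
  · have := hφ.continuousAt.eventually (gt_mem_nhds (by simpa using hneg))
    exact (this.filter_mono nhdsWithin_le_nhds).mono fun s hs => hs.le
  · have hslope := hφ.tendsto_slope_zero_right.eventually (gt_mem_nhds (hw i hzero))
    filter_upwards [hslope, self_mem_nhdsWithin] with s hs (hs0 : 0 < s)
    simp only [zero_add, zero_smul, add_zero, hzero, sub_zero, smul_eq_mul] at hs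
    exact (neg_of_mul_neg_right hs (inv_pos.2 hs0).le).le

theorem inner_nonpos_of_mem_proxNormalCone_sublevel (hf : ∀ i, DifferentiableAt ℝ (f i) x)
    (hx : ∀ i, f i x ≤ 0)
    (hind : PosLinearIndepOn (fun i => gradient (f i) x) {i | f i x = 0})
    {ζ : H} (hζ : ζ ∈ proxNormalCone {y | ∀ i, f i y ≤ 0} x)
    {v : H} (hv : ∀ i, f i x = 0 → ⟪gradient (f i) x, v⟫ ≤ 0) : ⟪ζ, v⟫ ≤ 0 := by
  obtain ⟨w, hw⟩ := hind.exists_inner_neg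
  have hlim : Tendsto (fun δ : ℝ => ⟪ζ, v + δ • w⟫) (𝓝[>] 0) (𝓝 ⟪ζ, v⟫) := by
    have : Continuous fun δ : ℝ => ⟪ζ, v + δ • w⟫ := by fun_prop
    simpa using (this.tendsto 0).mono_left nhdsWithin_le_nhds
  refine le_of_tendsto hlim ?_
  filter_upwards [self_mem_nhdsWithin] with δ (hδ : 0 < δ)
  refine inner_nonpos_of_mem_proxNormalCone hζ (eventually_sublevel_add_smul hf hx fun i hi => ?_)
  rw [inner_add_right, real_inner_smul_right]
  nlinarith [hv i hi, hw i hi]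

theorem mem_closure_hull_of_mem_proxNormalCone_sublevel (hf : ∀ i, DifferentiableAt ℝ (f i) x)
    (hx : ∀ i, f i x ≤ 0)
    (hind : PosLinearIndepOn (fun i => gradient (f i) x) {i | f i x = 0})
    {ζ : H} (hζ : ζ ∈ proxNormalCone {y | ∀ i, f i y ≤ 0} x) :
    ζ ∈ closure (PointedCone.hull ℝ
      ((fun i => gradient (f i) x) '' {i | f i x = 0}) : Set H) := by
  refine PointedCone.mem_closure_of_forall_inner_nonneg fun y hy => ?_
  have := inner_nonpos_of_mem_proxNormalCone_sublevel hf hx hind hζ (v := -y) fun i hi => by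
    simpa using hy _ (PointedCone.subset_hull ⟨i, hi, rfl⟩)
  simpa using this

end

theorem uniformProxRegular_sublevel {f : ι → H → ℝ} {L η c : ℝ} (hL : 0 < L) (hη : 0 < η)
    (hc : 0 < c) (hf : ∀ i x, DifferentiableAt ℝ (f i) x)
    (hLip : ∀ i, ∀ x ∈ {y | ∀ i, f i y ≤ 0} + closedBall (0 : H) η,
      ∀ y ∈ {y | ∀ i, f i y ≤ 0} + closedBall (0 : H) η,
        ‖gradient (f i) x - gradient (f i) y‖ ≤ L * ‖x - y‖)
    (hbound : ∀ x ∈ {y | ∀ i, f i y ≤ 0}, ∀ β : ι → ℝ, (∀ i, 0 ≤ β i) →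
      (∀ i, f i x ≠ 0 → β i = 0) → c * ∑ i, β i ≤ ‖∑ i, β i • gradient (f i) x‖) :
    UniformProxRegular (min (c / (2 * L)) η) {y | ∀ i, f i y ≤ 0} := by
  intro x hx ζ hζ x' hx'
  set ρ := min (c / (2 * L)) η
  have hρ : 0 < ρ := lt_min (by positivity) hη
  rcases le_or_gt ‖x' - x‖ (2 * η) with hnear | hfar
  · have hseg := segment_subset_add_closedBall hx hx' hnear
    have hxU : x ∈ {y | ∀ i, f i y ≤ 0} + closedBall (0 : H) η := hseg (left_mem_segment ℝ x x')
    have hgrad : ∀ i ∈ {i | f i x = 0}, ⟪gradient (f i) x, x' - x⟫ ≤ L * ‖x' - x‖ ^ 2 := by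
      intro i hi
      have := inner_gradient_le_of_norm_gradient_sub_le (M := L * ‖x' - x‖)
        (fun z _ => hf i z) fun z hz => (hLip i z (hseg hz) x hxU).trans <|
          mul_le_mul_of_nonneg_left (norm_sub_le_of_mem_segment hz) hL.le
      have hi : f i x = 0 := hi
      nlinarith [hx' i]
    have hζK := mem_closure_hull_of_mem_proxNormalCone_sublevel (hf · x) hx
      (.of_mul_sum_le_norm hc (hbound x hx)) hζ
    have hLc : L / c ≤ 1 / (2 * ρ) := by
      rw [div_le_div_iff₀ hc (by positivity)]
      have := (le_div_iff₀ (by positivity)).1 (min_le_left (c / (2 * L)) η)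
      linarith
    calc ⟪ζ, x' - x⟫ ≤ L * ‖x' - x‖ ^ 2 / c * ‖ζ‖ :=
          inner_le_of_mem_closure_hull (by positivity) hc hgrad (hbound x hx) hζK
      _ = ‖ζ‖ * ‖x' - x‖ ^ 2 * (L / c) := by ring
      _ ≤ ‖ζ‖ * ‖x' - x‖ ^ 2 * (1 / (2 * ρ)) := by gcongr
      _ = ‖ζ‖ / (2 * ρ) * ‖x' - x‖ ^ 2 := by ring
  · exact real_inner_le_div_mul_sq_of_two_mul_le_norm ζ hρ
      (by linarith [min_le_right (c / (2 * L)) η])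

theorem exists_pos_mul_sum_le_norm_sum_gradient [ProperSpace H] {m : ℕ} {T ε : ℝ}
    {g : Fin m → ℝ → H → ℝ} (hε : 0 ≤ ε)
    (hQbdd : Bornology.IsBounded {p : ℝ × H |
      p.1 ∈ Icc (0:ℝ) T ∧ p.2 ∈ Csub g p.1 ∧ (Iactive g ε p.1 p.2).Nonempty})
    (hPLI : ∀ t ∈ Icc (0:ℝ) T, ∀ x ∈ Csub g t, (Iactive g ε t x).Nonempty →
      PosLinearIndepOn (fun i => gradient (g i t) x) (Iactive g ε t x))
    (hg_cont : ∀ i, ContinuousOn (fun p : ℝ × H => g i p.1 p.2) (Icc (0:ℝ) T ×ˢ univ))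
    (hgrad_cont : ∀ i, ContinuousOn (fun p : ℝ × H => gradient (g i p.1) p.2)
      (Icc (0:ℝ) T ×ˢ univ)) :
    ∃ c > 0, ∀ t ∈ Icc (0:ℝ) T, ∀ x ∈ Csub g t, ∀ β : Fin m → ℝ, (∀ i, 0 ≤ β i) →
      (∀ i, g i t x ≠ 0 → β i = 0) → c * ∑ i, β i ≤ ‖∑ i, β i • gradient (g i t) x‖ := by
  set B : Set (ℝ × H) := Icc 0 T ×ˢ univ
  have hB : IsClosed B := isClosed_Icc.prod isClosed_univ
  have hpre : ∀ i {s : Set ℝ}, IsClosed s → IsClosed (B ∩ (fun p => g i p.1 p.2) ⁻¹' s) :=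
    fun i _ hs => (hg_cont i).preimage_isClosed_of_isClosed hB hs
  set Q := {p : ℝ × H | p.1 ∈ Icc (0:ℝ) T ∧ p.2 ∈ Csub g p.1 ∧ (Iactive g ε p.1 p.2).Nonempty}
  have hQ : IsClosed Q := by
    have : Q = B ∩ (⋂ i, B ∩ (fun p => g i p.1 p.2) ⁻¹' Iic 0) ∩
        ⋃ i, B ∩ (fun p => g i p.1 p.2) ⁻¹' Icc (-ε) 0 := by
      ext p
      simp only [Q, B, Csub, Iactive, Set.Nonempty, mem_inter_iff, mem_iInter, mem_iUnion,
        mem_prod, mem_univ, and_true, mem_preimage, mem_ofPred_eq, mem_Iic, mem_Icc]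
      constructor
      · rintro ⟨ht, hx, i, hi⟩
        exact ⟨⟨ht, fun j => ⟨ht, hx j⟩⟩, i, ht, hi⟩
      · rintro ⟨⟨ht, hx⟩, hact⟩
        exact ⟨ht, fun j => (hx j).2, hact.imp fun i hi => hi.2⟩
    rw [this]
    exact (hB.inter (isClosed_iInter fun i => hpre i isClosed_Iic)).inter
      (isClosed_iUnion_of_finite fun i => hpre i isClosed_Icc)
  set A : Fin m → Set (ℝ × H) := fun i => B ∩ (fun p => g i p.1 p.2) ⁻¹' Ici (-ε)
  obtain ⟨c, hc, hcQ⟩ := exists_pos_mul_sum_le_norm_sum_smul_of_isCompact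
    (isCompact_of_isClosed_isBounded hQ hQbdd) (v := fun i p => gradient (g i p.1) p.2)
    (fun i => (hgrad_cont i).mono fun p hp => ⟨hp.1, mem_univ _⟩) (A := A)
    (fun i => hpre i isClosed_Ici) fun p ⟨ht, hx, hact⟩ =>
      (hPLI p.1 ht p.2 hx hact).mono fun i hi => ⟨hi.2, hx i⟩
  refine ⟨c, hc, fun t ht x hx β hβ0 hβ => ?_⟩
  by_cases hact : (Iactive g ε t x).Nonempty
  · exact hcQ (t, x) ⟨ht, hx, hact⟩ β hβ0 fun i hi => hβ i fun hzero =>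
      hi ⟨⟨ht, mem_univ _⟩, by simp [hzero, hε]⟩
  · have hβ0' : ∀ i, β i = 0 := fun i => hβ i fun hzero =>
      hact ⟨i, by simp [hzero, hε], hzero.le⟩
    simp [hβ0']

end

theorem stmt14_general (d m : ℕ) (T : ℝ)
    (g : Fin m → ℝ → EuclideanSpace ℝ (Fin d) → ℝ)
    (hdiff : ∀ i, ∀ t ∈ Icc (0:ℝ) T, ∀ x, DifferentiableAt ℝ (g i t) x)
    -- assumption (a)
    (ε : ℝ) (hε : 0 < ε)
    (hQbdd : Bornology.IsBounded {p : ℝ × EuclideanSpace ℝ (Fin d) |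
      p.1 ∈ Icc (0:ℝ) T ∧ p.2 ∈ Csub g p.1 ∧ (Iactive g ε p.1 p.2).Nonempty})
    (hPLI : ∀ t ∈ Icc (0:ℝ) T, ∀ x ∈ Csub g t, (Iactive g ε t x).Nonempty →
      ∀ α : Fin m → ℝ, (∀ i, 0 ≤ α i) → (∀ i, i ∉ Iactive g ε t x → α i = 0) →
        ∑ i, α i • gradient (g i t) x = 0 → ∀ i, α i = 0)
    -- assumption (b)
    (hg_cont : ∀ i, ContinuousOn (fun p : ℝ × EuclideanSpace ℝ (Fin d) => g i p.1 p.2)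
      (Icc (0:ℝ) T ×ˢ univ))
    (hgrad_cont : ∀ i, ContinuousOn
      (fun p : ℝ × EuclideanSpace ℝ (Fin d) => gradient (g i p.1) p.2)
      (Icc (0:ℝ) T ×ˢ univ))
    -- assumption (c)
    (hLip : ∃ L > 0, ∃ η > 0, ∀ t ∈ Icc (0:ℝ) T, ∀ i,
      ∀ x ∈ Csub g t + closedBall (0 : EuclideanSpace ℝ (Fin d)) η,
      ∀ y ∈ Csub g t + closedBall (0 : EuclideanSpace ℝ (Fin d)) η,
        ‖gradient (g i t) x - gradient (g i t) y‖ ≤ L * ‖x - y‖) :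
    ∃ ρ > 0, ∀ t ∈ Icc (0:ℝ) T, UniformProxRegular ρ (Csub g t) := by
  obtain ⟨L, hL, η, hη, hLip⟩ := hLip
  obtain ⟨c, hc, hbound⟩ :=
    exists_pos_mul_sum_le_norm_sum_gradient hε.le hQbdd hPLI hg_cont hgrad_cont
  exact ⟨min (c / (2 * L)) η, lt_min (by positivity) hη, fun t ht =>
    uniformProxRegular_sublevel hL hη hc (hdiff · t ht) (hLip t ht) (hbound t ht)⟩

theorem stmt14 (d m : ℕ) (T : ℝ) (hT : 0 < T)
    (g : Fin m → ℝ → EuclideanSpace ℝ (Fin d) → ℝ)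
    (hdiff : ∀ i, ∀ t ∈ Icc (0:ℝ) T, ∀ x, DifferentiableAt ℝ (g i t) x)
    -- assumption (a)
    (ε : ℝ) (hε : 0 < ε)
    (hQbdd : Bornology.IsBounded {p : ℝ × EuclideanSpace ℝ (Fin d) |
      p.1 ∈ Icc (0:ℝ) T ∧ p.2 ∈ Csub g p.1 ∧ (Iactive g ε p.1 p.2).Nonempty})
    (hPLI : ∀ t ∈ Icc (0:ℝ) T, ∀ x ∈ Csub g t, (Iactive g ε t x).Nonempty →
      ∀ α : Fin m → ℝ, (∀ i, 0 ≤ α i) → (∀ i, i ∉ Iactive g ε t x → α i = 0) →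
        ∑ i, α i • gradient (g i t) x = 0 → ∀ i, α i = 0)
    -- assumption (b)
    (hg_cont : ∀ i, ContinuousOn (fun p : ℝ × EuclideanSpace ℝ (Fin d) => g i p.1 p.2)
      (Icc (0:ℝ) T ×ˢ univ))
    (hgrad_cont : ∀ i, ContinuousOn
      (fun p : ℝ × EuclideanSpace ℝ (Fin d) => gradient (g i p.1) p.2)
      (Icc (0:ℝ) T ×ˢ univ))
    (hequi : ∀ ε' > 0, ∃ δ > 0, ∀ i, ∀ x : EuclideanSpace ℝ (Fin d),
      ∀ s ∈ Icc (0:ℝ) T, ∀ t ∈ Icc (0:ℝ) T, |s - t| < δ → |g i s x - g i t x| < ε')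
    -- assumption (c)
    (hLip : ∃ L > 0, ∃ η > 0, ∀ t ∈ Icc (0:ℝ) T, ∀ i,
      ∀ x ∈ Csub g t + closedBall (0 : EuclideanSpace ℝ (Fin d)) η,
      ∀ y ∈ Csub g t + closedBall (0 : EuclideanSpace ℝ (Fin d)) η,
        ‖gradient (g i t) x - gradient (g i t) y‖ ≤ L * ‖x - y‖)
    (hne : ∀ t ∈ Icc (0:ℝ) T, (Csub g t).Nonempty) :
    ∃ ρ > 0, ∀ t ∈ Icc (0:ℝ) T, UniformProxRegular ρ (Csub g t) :=
  stmt14_general d m T g hdiff ε hε hQbdd hPLI hg_cont hgrad_cont hLip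
end
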